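/- arXiv:0910.2187 — 10 statements merged into one kernel-verified Lean document; each statement's English description precedes it below -/
import Mathlib

section
/- Let P₁, …, P_k ⊆ ℝⁿ be convex polyhedra (each the intersection of finitely many closed half-spaces, with at least one defining inequality). Then the closure of ℝⁿ \ (P₁ ∪ ⋯ ∪ P_k) is a finite union of convex polyhedra. -/
/-- A convex polyhedron: the solution set of `A x ≤ b` for an `m × n` matrix
`A` and `b ∈ ℝᵐ`, with `m ≥ 1`. -/
def IsConvexPolyhedron (n : ℕ) (P : Set (Fin n → ℝ)) : Prop :=
  ∃ (m : ℕ), 1 ≤ m ∧ ∃ (A : Matrix (Fin m) (Fin n) ℝ) (b : Fin m → ℝ),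
    P = {x | A.mulVec x ≤ b}

/-! A point outside `⋃ i, P i` violates, for every `i`, one of the inequalities defining `P i`.
So the complement is the finite union, over all choices of one row from each system, of the open
polyhedra cut out by the reversed strict inequalities. Closure commutes with finite unions, and
the closure of a nonempty open polyhedron is obtained by relaxing its strict inequalities. -/

open Set Matrix

/-- The trivial inequality `0 ≤ 0` is added as an extra row, so that the system has `m ≥ 1` rows
even when `ι` is empty. -/
theorem isConvexPolyhedron_setOf_mulVec_le {n : ℕ} {ι : Type*} [Fintype ι]
    (B : Matrix ι (Fin n) ℝ) (c : ι → ℝ) : IsConvexPolyhedron n {x | B *ᵥ x ≤ c} := by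
  let e := Fintype.equivFin (Option ι)
  refine ⟨Fintype.card (Option ι), by simp, of fun r => (e.symm r).elim 0 B,
    fun r => (e.symm r).elim 0 c, ?_⟩
  ext x
  simp only [mem_ofPred_eq, Pi.le_def, e.symm.forall_congr_left, Option.forall]
  simp [mulVec, Option.elim]

theorem isConvexPolyhedron_empty (n : ℕ) : IsConvexPolyhedron n ∅ := by
  convert isConvexPolyhedron_setOf_mulVec_le (0 : Matrix Unit (Fin n) ℝ) (-1)
  ext x
  simp [Pi.le_def]

theorem isConvexPolyhedron_setOf_le_mulVec {n : ℕ} {ι : Type*} [Fintype ι]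
    (B : Matrix ι (Fin n) ℝ) (c : ι → ℝ) : IsConvexPolyhedron n {x | c ≤ B *ᵥ x} := by
  convert isConvexPolyhedron_setOf_mulVec_le (-B) (-c) using 3
  rw [neg_mulVec, neg_le_neg_iff]

/-- Every point `y` of the right-hand side is an endpoint of a segment whose interior lies in the
left-hand set. -/
theorem closure_setOf_forall_lt {E ι : Type*} [AddCommGroup E] [Module ℝ E] [TopologicalSpace E]
    [ContinuousAdd E] [ContinuousSMul ℝ E] (L : E →L[ℝ] ι → ℝ) (c : ι → ℝ)
    (hne : {x | ∀ i, c i < L x i}.Nonempty) :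
    closure {x | ∀ i, c i < L x i} = {x | c ≤ L x} := by
  refine (closure_minimal (fun x hx i => (hx i).le)
    (isClosed_le continuous_const L.continuous)).antisymm ?_
  obtain ⟨z, hz⟩ := hne
  intro y hy
  have hsegment : openSegment ℝ z y ⊆ {x | ∀ i, c i < L x i} := by
    rintro _ ⟨a, b, ha, hb, hab, rfl⟩ i
    have hz' := mul_lt_mul_of_pos_left (hz i) ha
    have hy' := mul_le_mul_of_nonneg_left (hy i) hb.le
    have hc : c i = a * c i + b * c i := by rw [← add_mul, hab, one_mul]
    simp only [map_add, map_smul, Pi.add_apply, Pi.smul_apply, smul_eq_mul]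
    linarith
  exact closure_mono hsegment (segment_subset_closure_openSegment (right_mem_segment ℝ z y))

theorem isConvexPolyhedron_closure_setOf_forall_lt_mulVec {n : ℕ} {ι : Type*} [Fintype ι]
    (B : Matrix ι (Fin n) ℝ) (c : ι → ℝ) :
    IsConvexPolyhedron n (closure {x | ∀ i, c i < (B *ᵥ x) i}) := by
  rcases eq_empty_or_nonempty {x | ∀ i, c i < (B *ᵥ x) i} with h | h
  · simpa only [h, closure_empty] using isConvexPolyhedron_empty n
  · convert isConvexPolyhedron_setOf_le_mulVec B c
    exact closure_setOf_forall_lt (mulVecLin B).toContinuousLinearMap c h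

theorem compl_iUnion_setOf_mulVec_le {n k : ℕ} {m : Fin k → ℕ}
    (A : ∀ i, Matrix (Fin (m i)) (Fin n) ℝ) (b : ∀ i, Fin (m i) → ℝ) :
    (⋃ i, {x | A i *ᵥ x ≤ b i})ᶜ =
      ⋃ f : ∀ i, Fin (m i), {x | ∀ i, b i (f i) < ((of fun i => A i (f i)) *ᵥ x) i} := by
  ext x
  simp [Pi.le_def, Classical.skolem, mulVec]

theorem stmt_1 (n k : ℕ) (P : Fin k → Set (Fin n → ℝ))
    (hP : ∀ i, IsConvexPolyhedron n (P i)) :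
    ∃ (K : ℕ) (Q : Fin K → Set (Fin n → ℝ)),
      (∀ j, IsConvexPolyhedron n (Q j)) ∧
      closure (Set.univ \ ⋃ i, P i) = ⋃ j, Q j := by
  choose m _ A b hPeq using hP
  obtain rfl : P = fun i => {x | A i *ᵥ x ≤ b i} := funext hPeq
  let cell (f : ∀ i, Fin (m i)) : Set (Fin n → ℝ) :=
    closure {x | ∀ i, b i (f i) < ((of fun i => A i (f i)) *ᵥ x) i}
  let e := Fintype.equivFin (∀ i, Fin (m i))
  refine ⟨Fintype.card (∀ i, Fin (m i)), fun j => cell (e.symm j),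
    fun j => isConvexPolyhedron_closure_setOf_forall_lt_mulVec _ _, ?_⟩
  rw [e.symm.surjective.iUnion_comp cell, ← compl_eq_univ_sdiff, compl_iUnion_setOf_mulVec_le,
    closure_iUnion_of_finite]
end

section
/- Let Φ : V → W be a C¹-diffeomorphism between open sets V, W ⊆ ℝⁿ, let Ω ⊆ V be such that both Ω and Φ(Ω) are convex, and let p ∈ Ω. Then a vector v ∈ ℝⁿ is normal to Ω at p (i.e., ⟨v, x − p⟩ ≤ 0 for all x ∈ Ω) if and only if (Φ'(p)⁻¹)* v is normal to Φ(Ω) at Φ(p). -/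
/-! The normal cone of a convex set `S` at `q` is dual to its tangent cone, which contains every
`y - q` with `y ∈ S`. Pairing a normal vector with a differentiable map `g` gives a function
`x ↦ ⟪v, g x⟫` maximised on `S` at `q`, so its derivative is nonpositive on the tangent cone.
Applying this to `Φ` on `Ω` and to its inverse `Ψ` on `Φ '' Ω`, whose derivative at `Φ p` is
`(Φ' p)⁻¹` by the inverse function theorem, gives the two implications. -/

open scoped RealInnerProductSpace Topology
open Filter Set

theorem Convex.inner_fderiv_sub_nonpos {E F : Type*} [NormedAddCommGroup E] [NormedSpace ℝ E]
    [NormedAddCommGroup F] [InnerProductSpace ℝ F] {S : Set E} (hS : Convex ℝ S) {q y : E}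
    (hq : q ∈ S) (hy : y ∈ S) {g : E → F} {D : E →L[ℝ] F} (hg : HasFDerivWithinAt g D S q)
    {v : F} (hv : ∀ x ∈ S, ⟪v, g x - g q⟫ ≤ 0) : ⟪v, D (y - q)⟫ ≤ 0 := by
  have hmax : IsLocalMaxOn (fun x => ⟪v, g x⟫) S q :=
    IsMaxOn.localize fun x hx => show ⟪v, g x⟫ ≤ ⟪v, g q⟫ by
      simpa only [inner_sub_right, sub_nonpos] using hv x hx
  exact hmax.hasFDerivWithinAt_nonpos ((innerSL ℝ v).hasFDerivAt.comp_hasFDerivWithinAt q hg)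
    (sub_mem_posTangentConeAt_of_segment_subset (hS.segment_subset hq hy))

theorem stmt_2_general (n : ℕ)
    (V W : Set (EuclideanSpace ℝ (Fin n))) (hV : IsOpen V)
    (Φ Ψ : EuclideanSpace ℝ (Fin n) → EuclideanSpace ℝ (Fin n))
    (Φ' : EuclideanSpace ℝ (Fin n) →
      (EuclideanSpace ℝ (Fin n) ≃L[ℝ] EuclideanSpace ℝ (Fin n)))
    -- Φ is a C¹-diffeomorphism of V onto W with inverse Ψ and derivative Φ'
    (hinv : Set.InvOn Ψ Φ V W)
    (hd : ∀ x ∈ V, HasFDerivAt Φ (Φ' x : EuclideanSpace ℝ (Fin n) →L[ℝ]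
      EuclideanSpace ℝ (Fin n)) x)
    (hdc : ContinuousOn (fun x => (Φ' x : EuclideanSpace ℝ (Fin n) →L[ℝ]
      EuclideanSpace ℝ (Fin n))) V)
    (Ω : Set (EuclideanSpace ℝ (Fin n))) (hΩV : Ω ⊆ V)
    (hΩconv : Convex ℝ Ω) (hΦΩconv : Convex ℝ (Φ '' Ω))
    (p : EuclideanSpace ℝ (Fin n)) (hp : p ∈ Ω)
    (v : EuclideanSpace ℝ (Fin n)) :
    (∀ x ∈ Ω, ⟪v, x - p⟫ ≤ 0) ↔
      (∀ y ∈ Φ '' Ω,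
        ⟪ContinuousLinearMap.adjoint
          ((Φ' p).symm : EuclideanSpace ℝ (Fin n) →L[ℝ]
            EuclideanSpace ℝ (Fin n)) v, y - Φ p⟫ ≤ 0) := by
  have hpV : p ∈ V := hΩV hp
  have hVp : V ∈ 𝓝 p := hV.mem_nhds hpV
  have hΦ : HasStrictFDerivAt Φ (Φ' p : EuclideanSpace ℝ (Fin n) →L[ℝ]
      EuclideanSpace ℝ (Fin n)) p :=
    hasStrictFDerivAt_of_hasFDerivAt_of_continuousAt (eventually_of_mem hVp hd)
      (hdc.continuousAt hVp)
  have hΨ : HasFDerivAt Ψ ((Φ' p).symm : EuclideanSpace ℝ (Fin n) →L[ℝ]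
      EuclideanSpace ℝ (Fin n)) (Φ p) :=
    (hΦ.to_local_left_inverse (eventually_of_mem hVp hinv.1)).hasFDerivAt
  constructor
  · intro hnormal y hy
    rw [ContinuousLinearMap.adjoint_inner_left]
    refine hΦΩconv.inner_fderiv_sub_nonpos (mem_image_of_mem Φ hp) hy hΨ.hasFDerivWithinAt ?_
    rintro _ ⟨x, hx, rfl⟩
    rw [hinv.1 (hΩV hx), hinv.1 hpV]
    exact hnormal x hx
  · intro hnormal x hx
    simpa [ContinuousLinearMap.adjoint_inner_left] using
      hΩconv.inner_fderiv_sub_nonpos hp hx (hd p hpV).hasFDerivWithinAt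
        fun z hz => hnormal (Φ z) (mem_image_of_mem Φ hz)

theorem stmt_2 (n : ℕ)
    (V W : Set (EuclideanSpace ℝ (Fin n))) (hV : IsOpen V) (hW : IsOpen W)
    (Φ Ψ : EuclideanSpace ℝ (Fin n) → EuclideanSpace ℝ (Fin n))
    (Φ' : EuclideanSpace ℝ (Fin n) →
      (EuclideanSpace ℝ (Fin n) ≃L[ℝ] EuclideanSpace ℝ (Fin n)))
    -- Φ is a C¹-diffeomorphism of V onto W with inverse Ψ and derivative Φ'
    (hbij : Set.BijOn Φ V W)
    (hinv : Set.InvOn Ψ Φ V W)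
    (hd : ∀ x ∈ V, HasFDerivAt Φ (Φ' x : EuclideanSpace ℝ (Fin n) →L[ℝ]
      EuclideanSpace ℝ (Fin n)) x)
    (hdc : ContinuousOn (fun x => (Φ' x : EuclideanSpace ℝ (Fin n) →L[ℝ]
      EuclideanSpace ℝ (Fin n))) V)
    (Ω : Set (EuclideanSpace ℝ (Fin n))) (hΩV : Ω ⊆ V)
    (hΩconv : Convex ℝ Ω) (hΦΩconv : Convex ℝ (Φ '' Ω))
    (p : EuclideanSpace ℝ (Fin n)) (hp : p ∈ Ω)
    (v : EuclideanSpace ℝ (Fin n)) :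
    (∀ x ∈ Ω, ⟪v, x - p⟫ ≤ 0) ↔
      (∀ y ∈ Φ '' Ω,
        ⟪ContinuousLinearMap.adjoint
          ((Φ' p).symm : EuclideanSpace ℝ (Fin n) →L[ℝ]
            EuclideanSpace ℝ (Fin n)) v, y - Φ p⟫ ≤ 0) :=
  stmt_2_general n V W hV Φ Ψ Φ' hinv hd hdc Ω hΩV hΩconv hΦΩconv p hp v
end

section
/- Let X ⊆ ℝⁿ, U be a set, G : X × U → X be such that G(·,u) is injective for every u ∈ U, and let ψ denote the general solution of the discrete-time system x_{k+1} = G(x_k, u_k), i.e., ψ(0,x,u) = x and ψ(k+1,x,u) = G(ψ(k,x,u), u_k). Given a sequence of sets Δ₀, Δ₁, …, Δ_N ⊆ ℝⁿ and an input sequence u, define M_k = { ψ(k, x₀, u) : x₀ ∈ X, and ψ(τ, x₀, u) ∈ Δ_τ for all 0 ≤ τ ≤ k }. Then for every k ∈ {0,…,N}, M_k equals the intersection over τ = 0,…,k of the images ψ(τ, X ∩ Δ_{k−τ}, u|_{[k−τ, k)}), where ψ(τ, S, v) denotes the pointwise image of S under ψ(τ, ·, v) using the input values v shifted appropriately. 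-/
/-!
The flow has the cocycle property `ψ (a + b) x u = ψ b (ψ a x u) (fun j => u (a + j))`. Hence a
trajectory from `x₀` reaches `ψ k x₀ u` from `ψ (k - τ) x₀ u ∈ X ∩ Δ (k - τ)` in `τ` steps, which
gives `M k ⊆ ⋂ …`. Conversely, if `y` lies in every image, let `x₀` be its preimage for `τ = k`;
for every other `τ`, injectivity of `ψ τ · v` forces the preimage of `y` in `X ∩ Δ (k - τ)` to be
`ψ (k - τ) x₀ u`, so the trajectory from `x₀` meets every `Δ`.
-/

structure IsGeneralSolution {α U : Type*} (G : α → U → α) (ψ : ℕ → α → (ℕ → U) → α) : Prop where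
  zero : ∀ x u, ψ 0 x u = x
  succ : ∀ k x u, ψ (k + 1) x u = G (ψ k x u) (u k)

namespace IsGeneralSolution

variable {α U : Type*} {G : α → U → α} {ψ : ℕ → α → (ℕ → U) → α}

theorem add (hψ : IsGeneralSolution G ψ) (a b : ℕ) (x : α) (v : ℕ → U) :
    ψ (a + b) x v = ψ b (ψ a x v) (fun j => v (a + j)) := by
  induction b with
  | zero => simp [hψ.zero]
  | succ b ih => rw [← add_assoc, hψ.succ, ih, hψ.succ]

theorem mapsTo (hψ : IsGeneralSolution G ψ) {X : Set α} (hGX : ∀ x ∈ X, ∀ u, G x u ∈ X)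
    (k : ℕ) (v : ℕ → U) : Set.MapsTo (fun x => ψ k x v) X X := by
  induction k with
  | zero => intro x hx; simpa only [hψ.zero] using hx
  | succ k ih => intro x hx; simpa only [hψ.succ] using hGX _ (ih hx) _

theorem injective (hψ : IsGeneralSolution G ψ) (hGinj : ∀ u, Function.Injective (fun x => G x u))
    (k : ℕ) (v : ℕ → U) : Function.Injective (fun x => ψ k x v) := by
  induction k with
  | zero => intro x y h; simpa [hψ.zero] using h
  | succ k ih => intro x y h; simp only [hψ.succ] at h; exact ih (hGinj (v k) h)

theorem eq_of_flow_shift_eq (hψ : IsGeneralSolution G ψ)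
    (hGinj : ∀ u, Function.Injective (fun x => G x u)) {τ σ : ℕ} {w x : α} {u : ℕ → U}
    (h : ψ σ w (fun j => u (τ + j)) = ψ (τ + σ) x u) : w = ψ τ x u :=
  hψ.injective hGinj σ _ (h.trans (hψ.add τ σ x u))

end IsGeneralSolution

theorem stmt_4 (n : ℕ) (U : Type*)
    (X : Set (EuclideanSpace ℝ (Fin n)))
    (G : EuclideanSpace ℝ (Fin n) → U → EuclideanSpace ℝ (Fin n))
    (hGX : ∀ x ∈ X, ∀ u : U, G x u ∈ X)
    (hGinj : ∀ u : U, Function.Injective (fun x => G x u))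
    (ψ : ℕ → EuclideanSpace ℝ (Fin n) → (ℕ → U) → EuclideanSpace ℝ (Fin n))
    (hψ0 : ∀ x u, ψ 0 x u = x)
    (hψs : ∀ k x u, ψ (k + 1) x u = G (ψ k x u) (u k))
    (N : ℕ) (Δ : ℕ → Set (EuclideanSpace ℝ (Fin n))) (u : ℕ → U)
    (M : ℕ → Set (EuclideanSpace ℝ (Fin n)))
    (hM : ∀ k, M k = {y | ∃ x₀ ∈ X, (∀ τ ≤ k, ψ τ x₀ u ∈ Δ τ) ∧ y = ψ k x₀ u}) :
    ∀ k ≤ N,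
      M k = ⋂ τ ∈ Finset.range (k + 1),
        (fun x => ψ τ x (fun j => u (k - τ + j))) '' (X ∩ Δ (k - τ)) := by
  have hψ : IsGeneralSolution G ψ := ⟨hψ0, hψs⟩
  intro k _
  ext y
  simp only [hM, Set.mem_ofPred_eq, Set.mem_iInter, Finset.mem_range, Nat.lt_succ_iff,
    Set.mem_image, Set.mem_inter_iff]
  constructor
  · rintro ⟨x₀, hx₀, hΔ, rfl⟩ τ hτ
    refine ⟨ψ (k - τ) x₀ u, ⟨hψ.mapsTo hGX _ _ hx₀, hΔ _ (Nat.sub_le _ _)⟩, ?_⟩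
    rw [← hψ.add, Nat.sub_add_cancel hτ]
  · intro h
    obtain ⟨x₀, ⟨hx₀, -⟩, hy⟩ := h k le_rfl
    simp only [Nat.sub_self, zero_add] at hy
    refine ⟨x₀, hx₀, fun τ hτ => ?_, hy.symm⟩
    obtain ⟨σ, rfl⟩ := Nat.exists_eq_add_of_le hτ
    obtain ⟨w, ⟨-, hwΔ⟩, hw⟩ := h σ (Nat.le_add_left _ _)
    rw [Nat.add_sub_cancel] at hwΔ hw
    rwa [← hψ.eq_of_flow_shift_eq hGinj (hw.trans hy.symm)]
end

section
/- Let M ⊆ ℝⁿ be nonempty, and for s > 0 define Θ(s) = ⋂_{x ∈ M} B̄(x, s), the intersection of closed balls of radius s centered at points of M. If r > 0 and Θ(r) contains at least two distinct points, then Θ(s) converges to Θ(r) in Hausdorff distance as s increases to r; that is, for every ε > 0 there exists s₀ < r such that for all s ∈ (s₀, r), Θ(s) is nonempty and the Hausdorff distance between Θ(s) and Θ(r) is less than ε. -/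
/-!
Let `x ≠ y` lie in `Θ(r)` and let `m` be their midpoint. By Apollonius' theorem `m` lies at
distance at most `s₁ = √(r² - (|x - y| / 2)²) < r` from every point of `M`, i.e. `m ∈ Θ(s₁)`.
Since the distance to a point is convex, moving any `z ∈ Θ(r)` towards `m` by the fraction
`(r - s) / (r - s₁)` of the way lands in `Θ(s)`. The displacement is at most that fraction of
`|z - m| ≤ r + s₁`, so the Hausdorff distance from `Θ(s)` to `Θ(r)` is `O(r - s)` for `s ∈ [s₁, r]`.
-/

open Metric Filter Topology

theorem iInter_closedBall_mono {X : Type*} [PseudoMetricSpace X] (M : Set X) {s r : ℝ}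
    (h : s ≤ r) :
    ⋂ p ∈ M, closedBall p s ⊆ ⋂ p ∈ M, closedBall p r :=
  Set.iInter₂_mono fun _ _ => closedBall_subset_closedBall h

section NormedSpace

variable {E : Type*} [NormedAddCommGroup E] [NormedSpace ℝ E]

theorem lineMap_mem_iInter_closedBall {M : Set E} {z m : E} {r s t : ℝ}
    (hz : z ∈ ⋂ p ∈ M, closedBall p r) (hm : m ∈ ⋂ p ∈ M, closedBall p s)
    (ht₀ : 0 ≤ t) (ht₁ : t ≤ 1) :
    AffineMap.lineMap z m t ∈ ⋂ p ∈ M, closedBall p ((1 - t) * r + t * s) := by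
  simp only [Set.mem_iInter₂, mem_closedBall] at hz hm ⊢
  intro p hp
  rw [AffineMap.lineMap_apply_module]
  calc dist ((1 - t) • z + t • m) p ≤ (1 - t) * dist z p + t * dist m p :=
        (convexOn_dist p convex_univ).2 trivial trivial (by linarith) ht₀ (by ring)
    _ ≤ (1 - t) * r + t * s :=
        add_le_add (mul_le_mul_of_nonneg_left (hz p hp) (by linarith))
          (mul_le_mul_of_nonneg_left (hm p hp) ht₀)

theorem hausdorffDist_iInter_closedBall_le {M : Set E} {p₀ m : E} (hp₀ : p₀ ∈ M)
    {s₁ s r : ℝ} (hm : m ∈ ⋂ p ∈ M, closedBall p s₁) (hs₁ : s₁ < r) (hs₁s : s₁ ≤ s)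
    (hsr : s ≤ r) :
    hausdorffDist (⋂ p ∈ M, closedBall p s) (⋂ p ∈ M, closedBall p r) ≤
      (r + s₁) / (r - s₁) * (r - s) := by
  have hgap : 0 < r - s₁ := sub_pos.2 hs₁
  set t := (r - s) / (r - s₁)
  have ht₀ : 0 ≤ t := div_nonneg (by linarith) hgap.le
  have ht₁ : t ≤ 1 := (div_le_one hgap).2 (by linarith)
  have hradius : (1 - t) * r + t * s₁ = s := by
    simp only [t]
    field_simp
    ring
  have hm₀ : dist m p₀ ≤ s₁ := mem_closedBall.1 (Set.mem_iInter₂.1 hm p₀ hp₀)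
  have hbound : (r + s₁) / (r - s₁) * (r - s) = t * (r + s₁) := by
    simp only [t]
    ring
  have hdiam : 0 ≤ r + s₁ := by linarith [dist_nonneg.trans hm₀]
  rw [hbound]
  apply hausdorffDist_le_of_mem_dist (mul_nonneg ht₀ hdiam)
  · intro w hw
    exact ⟨w, iInter_closedBall_mono M hsr hw, by rw [dist_self]; exact mul_nonneg ht₀ hdiam⟩
  · intro z hz
    refine ⟨AffineMap.lineMap z m t, hradius ▸ lineMap_mem_iInter_closedBall hz hm ht₀ ht₁, ?_⟩
    have hz₀ : dist z p₀ ≤ r := mem_closedBall.1 (Set.mem_iInter₂.1 hz p₀ hp₀)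
    calc dist z (AffineMap.lineMap z m t) = t * dist z m := by
          rw [dist_comm, dist_lineMap_left, Real.norm_of_nonneg ht₀]
      _ ≤ t * (r + s₁) := by
          gcongr
          linarith [dist_triangle_right z m p₀]

theorem tendsto_hausdorffDist_iInter_closedBall {M : Set E} (hM : M.Nonempty) {m : E}
    {s₁ r : ℝ} (hm : m ∈ ⋂ p ∈ M, closedBall p s₁) (hs₁ : s₁ < r) :
    Tendsto (fun s => hausdorffDist (⋂ p ∈ M, closedBall p s) (⋂ p ∈ M, closedBall p r))
      (𝓝[<] r) (𝓝 0) := by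
  obtain ⟨p₀, hp₀⟩ := hM
  have hlinear : Tendsto (fun s => (r + s₁) / (r - s₁) * (r - s)) (𝓝[<] r) (𝓝 0) := by
    have hcont : Continuous fun s => (r + s₁) / (r - s₁) * (r - s) := by fun_prop
    exact (hcont.tendsto' r 0 (by simp)).mono_left nhdsWithin_le_nhds
  refine tendsto_of_tendsto_of_tendsto_of_le_of_le' tendsto_const_nhds hlinear
    (Eventually.of_forall fun _ => hausdorffDist_nonneg) ?_
  filter_upwards [Ioo_mem_nhdsLT hs₁] with s hs
  exact hausdorffDist_iInter_closedBall_le hp₀ hm hs₁ hs.1.le hs.2.le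

end NormedSpace

theorem midpoint_mem_iInter_closedBall {E : Type*} [NormedAddCommGroup E]
    [InnerProductSpace ℝ E] {M : Set E} {x y : E} {r : ℝ}
    (hx : x ∈ ⋂ p ∈ M, closedBall p r) (hy : y ∈ ⋂ p ∈ M, closedBall p r) :
    midpoint ℝ x y ∈ ⋂ p ∈ M, closedBall p √(r ^ 2 - (dist x y / 2) ^ 2) := by
  simp only [Set.mem_iInter₂, mem_closedBall] at hx hy ⊢
  intro p hp
  have hapollonius :=
    EuclideanGeometry.dist_sq_add_dist_sq_eq_two_mul_dist_midpoint_sq_add_half_dist_sq p x y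
  rw [dist_comm p x, dist_comm p y] at hapollonius
  have hxp : dist x p ^ 2 ≤ r ^ 2 := pow_le_pow_left₀ dist_nonneg (hx p hp) 2
  have hyp : dist y p ^ 2 ≤ r ^ 2 := pow_le_pow_left₀ dist_nonneg (hy p hp) 2
  have hmp := sq_nonneg (dist p (midpoint ℝ x y))
  rw [dist_comm, Real.le_sqrt dist_nonneg (by linarith)]
  linarith

theorem stmt_6 (n : ℕ) (M : Set (EuclideanSpace ℝ (Fin n))) (hM : M.Nonempty)
    (Θ : ℝ → Set (EuclideanSpace ℝ (Fin n)))
    (hΘ : ∀ s, Θ s = ⋂ x ∈ M, Metric.closedBall x s)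
    (r : ℝ) (hr : 0 < r)
    (x y : EuclideanSpace ℝ (Fin n)) (hx : x ∈ Θ r) (hy : y ∈ Θ r) (hxy : x ≠ y) :
    ∀ ε > 0, ∃ s₀ ∈ Set.Ioo 0 r, ∀ s ∈ Set.Ioo s₀ r,
      (Θ s).Nonempty ∧ Metric.hausdorffDist (Θ s) (Θ r) < ε := by
  intro ε hε
  obtain rfl : Θ = fun s => ⋂ p ∈ M, closedBall p s := funext hΘ
  have hm := midpoint_mem_iInter_closedBall hx hy
  have hs₁ : √(r ^ 2 - (dist x y / 2) ^ 2) < r := by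
    rw [Real.sqrt_lt' hr]
    nlinarith [dist_pos.2 hxy]
  have hevent : ∀ᶠ s in 𝓝[<] r, (⋂ p ∈ M, closedBall p s).Nonempty ∧
      hausdorffDist (⋂ p ∈ M, closedBall p s) (⋂ p ∈ M, closedBall p r) < ε := by
    filter_upwards [Ioo_mem_nhdsLT hs₁,
      (tendsto_hausdorffDist_iInter_closedBall hM hm hs₁).eventually (gt_mem_nhds hε)]
      with s hs hlt
    exact ⟨⟨_, iInter_closedBall_mono M hs.1.le hm⟩, hlt⟩
  obtain ⟨s₀, hs₀, hsub⟩ := (mem_nhdsLT_iff_exists_mem_Ico_Ioo_subset (half_lt_self hr)).1 hevent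
  exact ⟨s₀, ⟨by linarith [hs₀.1], hs₀.2⟩, hsub⟩
end

section
/- Let Ω ⊆ ℝⁿ (n ≥ 2) be an r-convex set, i.e., an intersection of a family of closed Euclidean balls of radius r > 0, and assume Ω contains at least two points. Then Ω has nonempty interior. -/
open Metric

variable {E : Type*} [NormedAddCommGroup E] [InnerProductSpace ℝ E]

theorem dist_midpoint_sq_le_of_mem_closedBall {x y z : E} {r : ℝ}
    (hx : x ∈ closedBall z r) (hy : y ∈ closedBall z r) :
    dist z (midpoint ℝ x y) ^ 2 ≤ r ^ 2 - dist x y ^ 2 / 4 := by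
  have apollonius :=
    EuclideanGeometry.dist_sq_add_dist_sq_eq_two_mul_dist_midpoint_sq_add_half_dist_sq z x y
  have hxz : dist z x ^ 2 ≤ r ^ 2 :=
    pow_le_pow_left₀ dist_nonneg (by rwa [dist_comm, ← mem_closedBall]) 2
  have hyz : dist z y ^ 2 ≤ r ^ 2 :=
    pow_le_pow_left₀ dist_nonneg (by rwa [dist_comm, ← mem_closedBall]) 2
  linarith

theorem closedBall_midpoint_subset_closedBall {x y z : E} {r : ℝ} (hr : 0 < r)
    (hx : x ∈ closedBall z r) (hy : y ∈ closedBall z r) :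
    closedBall (midpoint ℝ x y) (dist x y ^ 2 / (8 * r)) ⊆ closedBall z r := by
  -- `ρ` is chosen so that `(r - ρ) ^ 2 = r ^ 2 - dist x y ^ 2 / 4 + ρ ^ 2`.
  set ρ := dist x y ^ 2 / (8 * r)
  have hdiam : dist x y ≤ 2 * r := by
    linarith [dist_triangle_right x y z, mem_closedBall.mp hx, mem_closedBall.mp hy]
  have hρ : ρ ≤ r / 2 := by
    rw [div_le_iff₀ (by positivity)]
    nlinarith [dist_nonneg (x := x) (y := y)]
  have hsq : r ^ 2 - dist x y ^ 2 / 4 ≤ (r - ρ) ^ 2 := by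
    have : (r - ρ) ^ 2 = r ^ 2 - dist x y ^ 2 / 4 + ρ ^ 2 := by
      simp only [ρ]; field_simp; ring
    linarith [sq_nonneg ρ]
  have hmid : dist (midpoint ℝ x y) z ≤ r - ρ := by
    rw [dist_comm]
    exact le_of_sq_le_sq ((dist_midpoint_sq_le_of_mem_closedBall hx hy).trans hsq) (by linarith)
  intro p hp
  rw [mem_closedBall] at hp ⊢
  linarith [dist_triangle p (midpoint ℝ x y) z]

theorem stmt_7_general (n : ℕ) (r : ℝ) (hr : 0 < r)
    (M Ω : Set (EuclideanSpace ℝ (Fin n)))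
    (hΩ : Ω = ⋂ x ∈ M, Metric.closedBall x r)
    (x y : EuclideanSpace ℝ (Fin n)) (hx : x ∈ Ω) (hy : y ∈ Ω) (hxy : x ≠ y) :
    (interior Ω).Nonempty := by
  have hρ : 0 < dist x y ^ 2 / (8 * r) := by
    have := dist_pos.mpr hxy
    positivity
  refine ⟨midpoint ℝ x y, interior_maximal ?_ isOpen_ball (mem_ball_self hρ)⟩
  subst hΩ
  refine ball_subset_closedBall.trans (Set.subset_iInter₂ fun z hz => ?_)
  exact closedBall_midpoint_subset_closedBall hr
    (Set.mem_iInter₂.mp hx z hz) (Set.mem_iInter₂.mp hy z hz)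

theorem stmt_7 (n : ℕ) (hn : 2 ≤ n) (r : ℝ) (hr : 0 < r)
    (M Ω : Set (EuclideanSpace ℝ (Fin n)))
    (hΩ : Ω = ⋂ x ∈ M, Metric.closedBall x r)
    (x y : EuclideanSpace ℝ (Fin n)) (hx : x ∈ Ω) (hy : y ∈ Ω) (hxy : x ≠ y) :
    (interior Ω).Nonempty :=
  stmt_7_general n r hr M Ω hΩ x y hx hy hxy
end

section
/- Every r-convex subset Ω of ℝⁿ with at least two points satisfies Ω = closure(interior(Ω)). -/
/-!
If two points at distance `d > 0` lie in a closed ball of radius `r`, then by Apollonius' theorem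
the open ball of radius `r - √(r ^ 2 - d ^ 2 / 4) > 0` around their midpoint lies in that ball as
well. Hence an intersection of such balls containing two points has nonempty interior, and a
closed convex set with nonempty interior is the closure of its interior.
-/

open Metric Set

section InnerProductSpace

variable {E : Type*} [NormedAddCommGroup E] [InnerProductSpace ℝ E]

theorem dist_midpoint_le_sqrt_of_mem_closedBall {c x y : E} {r : ℝ}
    (hx : x ∈ closedBall c r) (hy : y ∈ closedBall c r) :
    dist (midpoint ℝ x y) c ≤ √(r ^ 2 - dist x y ^ 2 / 4) := by
  have h := EuclideanGeometry.dist_sq_add_dist_sq_eq_two_mul_dist_midpoint_sq_add_half_dist_sq c x y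
  rw [mem_closedBall, dist_comm] at hx hy
  rw [dist_comm]
  apply Real.le_sqrt_of_sq_le
  nlinarith [dist_nonneg (x := c) (y := x), dist_nonneg (x := c) (y := y)]

theorem ball_midpoint_subset_biInter_closedBall {M : Set E} {r : ℝ} {x y : E}
    (hx : x ∈ ⋂ c ∈ M, closedBall c r) (hy : y ∈ ⋂ c ∈ M, closedBall c r) :
    ball (midpoint ℝ x y) (r - √(r ^ 2 - dist x y ^ 2 / 4)) ⊆ ⋂ c ∈ M, closedBall c r := by
  rw [mem_iInter₂] at hx hy
  refine subset_iInter₂ fun c hc => ball_subset_closedBall.trans (closedBall_subset_closedBall' ?_)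
  linarith [dist_midpoint_le_sqrt_of_mem_closedBall (hx c hc) (hy c hc)]

theorem nonempty_interior_biInter_closedBall {M : Set E} {r : ℝ} (hr : 0 < r) {x y : E}
    (hx : x ∈ ⋂ c ∈ M, closedBall c r) (hy : y ∈ ⋂ c ∈ M, closedBall c r) (hxy : x ≠ y) :
    (interior (⋂ c ∈ M, closedBall c r)).Nonempty := by
  have hsqrt : √(r ^ 2 - dist x y ^ 2 / 4) < r := by
    rw [Real.sqrt_lt' hr]
    nlinarith [dist_pos.2 hxy]
  exact (nonempty_ball.2 (sub_pos.2 hsqrt)).mono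
    (isOpen_ball.subset_interior_iff.2 (ball_midpoint_subset_biInter_closedBall hx hy))

end InnerProductSpace

theorem stmt_8 (n : ℕ) (r : ℝ) (hr : 0 < r)
    (M Ω : Set (EuclideanSpace ℝ (Fin n)))
    (hΩ : Ω = ⋂ x ∈ M, Metric.closedBall x r)
    (x y : EuclideanSpace ℝ (Fin n)) (hx : x ∈ Ω) (hy : y ∈ Ω) (hxy : x ≠ y) :
    Ω = closure (interior Ω) := by
  subst hΩ
  have hconv : Convex ℝ (⋂ c ∈ M, closedBall c r) :=
    convex_iInter₂ fun c _ => convex_closedBall c r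
  rw [hconv.closure_interior_eq_closure_of_nonempty_interior
      (nonempty_interior_biInter_closedBall hr hx hy hxy),
    (isClosed_biInter fun c _ => isClosed_closedBall).closure_eq]
end

section
/- Let g : U ⊆ ℝⁿ → ℝ be continuous on the open set U, with g(0) = 0, and assume g is of class C¹ with locally Lipschitz derivative on a neighborhood of 0, with g'(0) surjective (nonzero). Suppose that for every h ∈ ker g'(0) with h ≠ 0, liminf_{t→0⁺} g'(th)h / t > 0. Then the set Ω = { x ∈ U : g(x) ≤ 0 } is weakly supported at 0 locally: there exist a neighborhood V of 0 and a nonzero vector v ∈ ℝⁿ such that ⟨v, x⟩ ≤ 0 for all x ∈ Ω ∩ V. -/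
/-!
Take `v` to be the gradient of `g` at `0`. If `⟪v, x⟫ > 0` for a small `x`, split
`x = h + w` with `h ∈ ker g'(0)` and `g'(0) w = ⟪v, x⟫ > 0`. Along the segment from `h` to `x`
the derivative of `g` in the direction `w` stays positive, because `g'` is continuous at `0`,
so `g x > g h`. Along the ray from `0` to `h` the radial derivative `g'(σ h) (σ h)` is positive:
the liminf hypothesis gives this for each kernel direction separately, the Lipschitz bound on
`g'` makes it stable under perturbing the direction, and compactness of the unit sphere of the
kernel makes it uniform. Hence `g h ≥ g 0 = 0` and `g x > 0`.
-/

open scoped RealInnerProductSpace NNReal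
open Metric Filter Set Topology

section

variable {E : Type*} [NormedAddCommGroup E] [NormedSpace ℝ E] {g : E → ℝ} {g' : E → E →L[ℝ] ℝ}

theorem lt_add_of_hasFDerivAt_segment (a d : E)
    (hg : ∀ σ ∈ Icc (0 : ℝ) 1, HasFDerivAt g (g' (a + σ • d)) (a + σ • d))
    (hpos : ∀ σ ∈ Ioo (0 : ℝ) 1, 0 < g' (a + σ • d) d) : g a < g (a + d) := by
  have hθ : ∀ σ ∈ Icc (0 : ℝ) 1, HasDerivAt (fun σ : ℝ => g (a + σ • d)) (g' (a + σ • d) d) σ :=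
    fun σ hσ => (hg σ hσ).comp_hasDerivAt σ
      (by simpa using ((hasDerivAt_id σ).smul_const d).const_add a)
  obtain ⟨c, hc, hslope⟩ := exists_hasDerivAt_eq_slope _ _ zero_lt_one
    (fun σ hσ => (hθ σ hσ).continuousAt.continuousWithinAt)
    (fun σ hσ => hθ σ (Ioo_subset_Icc_self hσ))
  have := hpos c hc
  rw [hslope] at this
  simpa using this

theorem lt_of_hasFDerivAt_ray (y : E)
    (hg : ∀ σ ∈ Icc (0 : ℝ) 1, HasFDerivAt g (g' (σ • y)) (σ • y))
    (hpos : ∀ σ ∈ Ioo (0 : ℝ) 1, 0 < g' (σ • y) (σ • y)) : g 0 < g y := by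
  simpa using lt_add_of_hasFDerivAt_segment (g' := g') 0 y (by simpa using hg) fun σ hσ => by
    have := hpos σ hσ
    rw [map_smul, smul_eq_mul] at this
    simpa using pos_of_mul_pos_right this hσ.1.le

theorem abs_apply_self_sub_apply_self_le {L : ℝ≥0} {W : Set E} (hL : LipschitzOnWith L g' W)
    {y z : E} (hy : y ∈ W) (hz : z ∈ W) (h0 : 0 ∈ W) (hky : g' 0 y = 0) (hkz : g' 0 z = 0) :
    |g' y y - g' z z| ≤ L * (‖y‖ + ‖z‖) * ‖y - z‖ := by
  have hLip : ∀ a ∈ W, ∀ b ∈ W, ‖g' a - g' b‖ ≤ L * ‖a - b‖ := fun a ha b hb => by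
    simpa only [dist_eq_norm] using hL.dist_le_mul a ha b hb
  have hsplit : g' y y - g' z z = (g' y - g' z) y + (g' z - g' 0) (y - z) := by
    simp only [sub_apply, map_sub, hky, hkz]
    ring
  rw [hsplit, ← Real.norm_eq_abs]
  calc ‖(g' y - g' z) y + (g' z - g' 0) (y - z)‖
      ≤ ‖g' y - g' z‖ * ‖y‖ + ‖g' z - g' 0‖ * ‖y - z‖ :=
        norm_add_le_of_le ((g' y - g' z).le_opNorm y) ((g' z - g' 0).le_opNorm (y - z))
    _ ≤ L * ‖y - z‖ * ‖y‖ + L * ‖z - 0‖ * ‖y - z‖ := by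
        gcongr
        exacts [hLip y hy z hz, hLip z hz 0 h0]
    _ = L * (‖y‖ + ‖z‖) * ‖y - z‖ := by rw [sub_zero]; ring

theorem eventually_apply_smul_self_pos {L : ℝ≥0} {W : Set E} (hW : W ∈ 𝓝 0)
    (hL : LipschitzOnWith L g' W) {e : E} (he : g' 0 e = 0)
    (hlim : 0 < liminf (fun t : ℝ => g' (t • e) e / t) (𝓝[>] 0)) :
    ∀ᶠ p : ℝ × E in 𝓝 (0, e), g' 0 p.2 = 0 → 0 < p.1 → 0 < g' (p.1 • p.2) (p.1 • p.2) := by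
  set ℓ := liminf (fun t : ℝ => g' (t • e) e / t) (𝓝[>] 0)
  -- a real liminf of a function unbounded below is `0`
  have hbdd : IsBoundedUnder (· ≥ ·) (𝓝[>] 0) (fun t : ℝ => g' (t • e) e / t) := by
    by_contra hb
    exact hlim.ne' (Real.liminf_of_not_isBoundedUnder hb)
  have hslope : ∀ᶠ t in 𝓝 (0 : ℝ), 0 < t → ℓ / 2 < g' (t • e) e / t :=
    eventually_nhdsWithin_iff.mp (eventually_lt_of_lt_liminf (half_lt_self hlim) hbdd)
  have hclose : ∀ᶠ h in 𝓝 e, L * (‖h‖ + ‖e‖) * ‖h - e‖ < ℓ / 2 :=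
    (show Continuous fun h : E => L * (‖h‖ + ‖e‖) * ‖h - e‖ by fun_prop).continuousAt.eventually_lt
      continuousAt_const (by simpa using half_pos hlim)
  have hsmul : Tendsto (fun p : ℝ × E => p.1 • p.2) (𝓝 (0, e)) (𝓝 0) := by
    simpa using (show Continuous fun p : ℝ × E => p.1 • p.2 by fun_prop).tendsto ((0 : ℝ), e)
  have hsmul_e : Tendsto (fun p : ℝ × E => p.1 • e) (𝓝 (0, e)) (𝓝 0) := by
    simpa using (show Continuous fun p : ℝ × E => p.1 • e by fun_prop).tendsto ((0 : ℝ), e)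
  filter_upwards [(continuous_fst.tendsto ((0 : ℝ), e)).eventually hslope,
    (continuous_snd.tendsto ((0 : ℝ), e)).eventually hclose, hsmul hW, hsmul_e hW]
    with ⟨t, h⟩ hslope hclose hth hte hkh ht
  have hqe : ℓ / 2 * t ^ 2 < g' (t • e) (t • e) := by
    have := (lt_div_iff₀ ht).mp (hslope ht)
    rw [map_smul, smul_eq_mul]
    nlinarith
  have hdiff := abs_apply_self_sub_apply_self_le hL hth hte (mem_of_mem_nhds hW)
    (by simp [hkh]) (by simp [he])
  rw [← smul_sub, norm_smul, norm_smul, norm_smul, Real.norm_eq_abs, abs_of_pos ht] at hdiff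
  have hsmall : L * (t * ‖h‖ + t * ‖e‖) * (t * ‖h - e‖) < ℓ / 2 * t ^ 2 := by
    have := mul_lt_mul_of_pos_left hclose (pow_pos ht 2)
    linarith
  linarith [(abs_le.mp hdiff).1]

theorem eventually_apply_self_pos_on_ker [ProperSpace E] {L : ℝ≥0} {W : Set E} (hW : W ∈ 𝓝 0)
    (hL : LipschitzOnWith L g' W)
    (hpos : ∀ h : E, g' 0 h = 0 → h ≠ 0 →
      0 < liminf (fun t : ℝ => g' (t • h) h / t) (𝓝[>] 0)) :
    ∀ᶠ y in 𝓝 (0 : E), g' 0 y = 0 → y ≠ 0 → 0 < g' y y := by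
  set S := sphere (0 : E) 1 ∩ {e | g' 0 e = 0}
  have hS : IsCompact S :=
    (isCompact_sphere 0 1).inter_right (isClosed_eq (g' 0).continuous continuous_const)
  have hunif := hS.eventually_forall_of_forall_eventually
    (P := fun t e => g' 0 e = 0 → 0 < t → 0 < g' (t • e) (t • e)) fun e he =>
      eventually_apply_smul_self_pos hW hL he.2 (hpos e he.2 (ne_zero_of_mem_unit_sphere ⟨e, he.1⟩))
  obtain ⟨δ, hδ, hball⟩ := Metric.eventually_nhds_iff.mp hunif
  filter_upwards [ball_mem_nhds 0 hδ] with y hy hky hy0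
  have hny : 0 < ‖y‖ := norm_pos_iff.mpr hy0
  have hunit : ‖y‖⁻¹ • y ∈ S := ⟨by simp [norm_smul, hny.ne'], by simp [hky]⟩
  have := hball (by simpa using hy) _ hunit (by simp [hky]) hny
  rwa [smul_smul, mul_inv_cancel₀ hny.ne', one_smul] at this

theorem eventually_apply_nonpos_of_sublevel [ProperSpace E]
    (hd : ∀ᶠ x in 𝓝 (0 : E), HasFDerivAt g (g' x) x)
    (hLip : ∃ (L : ℝ≥0) (W : Set E), W ∈ 𝓝 0 ∧ LipschitzOnWith L g' W) (hne : g' 0 ≠ 0)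
    (hpos : ∀ h : E, g' 0 h = 0 → h ≠ 0 →
      0 < liminf (fun t : ℝ => g' (t • h) h / t) (𝓝[>] 0)) :
    ∀ᶠ x in 𝓝 (0 : E), g x ≤ g 0 → g' 0 x ≤ 0 := by
  obtain ⟨L, W, hW, hL⟩ := hLip
  obtain ⟨u, hu⟩ : ∃ u, g' 0 u = 1 := by
    obtain ⟨u, hu⟩ := DFunLike.ne_iff.mp hne
    exact ⟨(g' 0 u)⁻¹ • u, by simpa using inv_mul_cancel₀ hu⟩
  have hcont : ContinuousAt g' 0 := hL.continuousOn.continuousAt hW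
  have hu_pos : ∀ᶠ y in 𝓝 (0 : E), 0 < g' y u :=
    continuousAt_const.eventually_lt (hcont.clm_apply continuousAt_const) (by simp [hu])
  obtain ⟨r, hr, hball⟩ := Metric.eventually_nhds_iff_ball.mp
    (hd.and (hu_pos.and (eventually_apply_self_pos_on_ker hW hL hpos)))
  set π : E → E := fun x => x - g' 0 x • u
  have hπ : Tendsto π (𝓝 0) (𝓝 0) := by
    simpa [π] using (show Continuous π by fun_prop).tendsto 0
  filter_upwards [ball_mem_nhds 0 hr, hπ (ball_mem_nhds 0 hr)] with x hx hπx hgx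
  by_contra! hx0
  have hker : g' 0 (π x) = 0 := by simp [π, hu]
  have hray : ∀ σ ∈ Icc (0 : ℝ) 1, σ • π x ∈ ball (0 : E) r := fun σ hσ =>
    (convex_ball 0 r).smul_mem_of_zero_mem (mem_ball_self hr) hπx hσ
  have hseg : ∀ σ ∈ Icc (0 : ℝ) 1, π x + σ • (g' 0 x • u) ∈ ball (0 : E) r := fun σ hσ => by
    simpa [π] using (convex_ball 0 r).add_smul_sub_mem hπx hx hσ
  have hgπ : g 0 ≤ g (π x) := by
    rcases eq_or_ne (π x) 0 with h0 | h0
    · rw [h0]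
    refine (lt_of_hasFDerivAt_ray (g' := g') _ (fun σ hσ => (hball _ (hray σ hσ)).1)
      fun σ hσ => (hball _ (hray σ (Ioo_subset_Icc_self hσ))).2.2 ?_ ?_).le
    · simp [hker]
    · exact smul_ne_zero hσ.1.ne' h0
  have hgx' : g (π x) < g x := by
    have := lt_add_of_hasFDerivAt_segment (g' := g') (π x) (g' 0 x • u)
      (fun σ hσ => (hball _ (hseg σ hσ)).1) fun σ hσ => by
        rw [map_smul, smul_eq_mul]
        exact mul_pos hx0 (hball _ (hseg σ (Ioo_subset_Icc_self hσ))).2.1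
    rwa [sub_add_cancel] at this
  linarith

end

theorem stmt_10_general (n : ℕ)
    (U : Set (EuclideanSpace ℝ (Fin n)))
    (g : EuclideanSpace ℝ (Fin n) → ℝ) (hg0 : g 0 = 0)
    (g' : EuclideanSpace ℝ (Fin n) → (EuclideanSpace ℝ (Fin n) →L[ℝ] ℝ))
    -- g is C¹ with locally Lipschitz derivative on a neighborhood of 0
    (hd : ∀ᶠ x in nhds (0 : EuclideanSpace ℝ (Fin n)), HasFDerivAt g (g' x) x)
    (hLip : ∃ (L : NNReal) (W : Set (EuclideanSpace ℝ (Fin n))),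
      W ∈ nhds (0 : EuclideanSpace ℝ (Fin n)) ∧ LipschitzOnWith L g' W)
    (hsurj : g' 0 ≠ 0)
    (hpos : ∀ h : EuclideanSpace ℝ (Fin n), g' 0 h = 0 → h ≠ 0 →
      0 < Filter.liminf (fun t : ℝ => g' (t • h) h / t) (nhdsWithin 0 (Set.Ioi 0))) :
    ∃ V ∈ nhds (0 : EuclideanSpace ℝ (Fin n)), ∃ v : EuclideanSpace ℝ (Fin n),
      v ≠ 0 ∧ ∀ x ∈ {x ∈ U | g x ≤ 0} ∩ V, ⟪v, x⟫ ≤ 0 := by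
  set v := (InnerProductSpace.toDual ℝ (EuclideanSpace ℝ (Fin n))).symm (g' 0)
  refine ⟨_, eventually_apply_nonpos_of_sublevel hd hLip hsurj hpos, v, by simpa [v] using hsurj, ?_⟩
  rintro x ⟨⟨-, hgx⟩, hx⟩
  rw [InnerProductSpace.toDual_symm_apply]
  exact hx (hg0 ▸ hgx)

theorem stmt_10 (n : ℕ)
    (U : Set (EuclideanSpace ℝ (Fin n))) (hU : IsOpen U) (h0U : (0 : EuclideanSpace ℝ (Fin n)) ∈ U)
    (g : EuclideanSpace ℝ (Fin n) → ℝ) (hgc : ContinuousOn g U) (hg0 : g 0 = 0)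
    (g' : EuclideanSpace ℝ (Fin n) → (EuclideanSpace ℝ (Fin n) →L[ℝ] ℝ))
    -- g is C¹ with locally Lipschitz derivative on a neighborhood of 0
    (hd : ∀ᶠ x in nhds (0 : EuclideanSpace ℝ (Fin n)), HasFDerivAt g (g' x) x)
    (hLip : ∃ (L : NNReal) (W : Set (EuclideanSpace ℝ (Fin n))),
      W ∈ nhds (0 : EuclideanSpace ℝ (Fin n)) ∧ LipschitzOnWith L g' W)
    (hsurj : g' 0 ≠ 0)
    (hpos : ∀ h : EuclideanSpace ℝ (Fin n), g' 0 h = 0 → h ≠ 0 →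
      0 < Filter.liminf (fun t : ℝ => g' (t • h) h / t) (nhdsWithin 0 (Set.Ioi 0))) :
    ∃ V ∈ nhds (0 : EuclideanSpace ℝ (Fin n)), ∃ v : EuclideanSpace ℝ (Fin n),
      v ≠ 0 ∧ ∀ x ∈ {x ∈ U | g x ≤ 0} ∩ V, ⟪v, x⟫ ≤ 0 :=
  stmt_10_general n U g hg0 g' hd hLip hsurj hpos
end

section
/- Let Ω ⊆ ℝⁿ be r-convex, compact, and let x be a boundary point of Ω with v a unit-length normal to Ω at x. Then Ω ⊆ B̄(x − r v, r), the closed ball of radius r centered at x − r v. -/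
/-!
Let `y ∈ Ω`. By the parallelogram identity, every ball of radius `r` containing `x` and `y` still
contains the point `a • x + (1 - a) • y` after it is pushed by `a (1 - a) ‖x - y‖² / (2r)` in any
unit direction. Testing the normal inequality at this point pushed along `v` and letting `a → 1`
gives `‖y - x‖² + 2r ⟪v, y - x⟫ ≤ 0`, which says exactly `‖y - (x - r • v)‖ ≤ r`.
-/

open scoped RealInnerProductSpace
open Metric Set Filter Topology

theorem le_of_forall_mem_Ico_mul_le {c b : ℝ} (h : ∀ a ∈ Ico (0 : ℝ) 1, a * c ≤ b) : c ≤ b := by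
  have hlim : Tendsto (fun a : ℝ => a * c) (𝓝[<] 1) (𝓝 c) := by
    simpa using ((continuous_mul_const c).tendsto 1).mono_left nhdsWithin_le_nhds
  exact le_of_tendsto hlim (mem_of_superset (Ico_mem_nhdsLT zero_lt_one) h)

section

variable {E : Type*} [NormedAddCommGroup E] [InnerProductSpace ℝ E]

theorem norm_smul_add_smul_sub_sq (x y z : E) (a : ℝ) :
    ‖a • x + (1 - a) • y - z‖ ^ 2
      = a * ‖x - z‖ ^ 2 + (1 - a) * ‖y - z‖ ^ 2 - a * (1 - a) * ‖x - y‖ ^ 2 := by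
  have hx : x - y = (x - z) - (y - z) := by abel
  have hc : a • x + (1 - a) • y - z = a • (x - z) + (1 - a) • (y - z) := by module
  rw [hc, hx]
  generalize x - z = u, y - z = w
  rw [norm_add_sq_real, norm_sub_sq_real, norm_smul, norm_smul, mul_pow, mul_pow,
    real_inner_smul_left, real_inner_smul_right, Real.norm_eq_abs, Real.norm_eq_abs, sq_abs,
    sq_abs]
  ring

theorem add_smul_mem_closedBall_of_norm_sub_sq_le {w z v : E} {r s : ℝ} (hr : 0 < r)
    (hs : 0 ≤ s) (hv : ‖v‖ ≤ 1) (hw : ‖w - z‖ ^ 2 ≤ r ^ 2 - s) :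
    w + (s / (2 * r)) • v ∈ closedBall z r := by
  set t := s / (2 * r) with ht
  have ht0 : 0 ≤ t := by positivity
  have hts : 2 * r * t = s := by rw [ht]; field_simp
  have hsr : s ≤ r ^ 2 := by nlinarith [sq_nonneg ‖w - z‖]
  have htr : t ≤ r := by nlinarith
  have hwz : ‖w - z‖ ≤ r - t :=
    le_of_pow_le_pow_left₀ two_ne_zero (by linarith) (by nlinarith)
  have htv : ‖t • v‖ ≤ t := by
    rw [norm_smul, Real.norm_of_nonneg ht0]
    exact mul_le_of_le_one_right ht0 hv
  rw [mem_closedBall, dist_eq_norm, add_sub_right_comm]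
  linarith [norm_add_le (w - z) (t • v)]

theorem smul_add_smul_add_smul_mem_iInter_closedBall {M : Set E} {r a : ℝ} (hr : 0 < r)
    (ha₀ : 0 ≤ a) (ha₁ : a ≤ 1) {x y v : E} (hx : x ∈ ⋂ z ∈ M, closedBall z r)
    (hy : y ∈ ⋂ z ∈ M, closedBall z r) (hv : ‖v‖ ≤ 1) :
    a • x + (1 - a) • y + (a * (1 - a) * ‖x - y‖ ^ 2 / (2 * r)) • v
      ∈ ⋂ z ∈ M, closedBall z r := by
  simp only [mem_iInter₂] at hx hy ⊢
  intro z hz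
  have h1a : 0 ≤ 1 - a := sub_nonneg.2 ha₁
  have hxz : ‖x - z‖ ^ 2 ≤ r ^ 2 :=
    pow_le_pow_left₀ (norm_nonneg _) (mem_closedBall_iff_norm.1 (hx z hz)) 2
  have hyz : ‖y - z‖ ^ 2 ≤ r ^ 2 :=
    pow_le_pow_left₀ (norm_nonneg _) (mem_closedBall_iff_norm.1 (hy z hz)) 2
  refine add_smul_mem_closedBall_of_norm_sub_sq_le hr (by positivity) hv ?_
  rw [norm_smul_add_smul_sub_sq]
  nlinarith

theorem iInter_closedBall_subset_closedBall_sub_smul {M : Set E} {r : ℝ} (hr : 0 < r) {x v : E}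
    (hx : x ∈ ⋂ z ∈ M, closedBall z r) (hv : ‖v‖ = 1)
    (hnormal : ∀ y ∈ ⋂ z ∈ M, closedBall z r, ⟪v, y - x⟫ ≤ 0) :
    ⋂ z ∈ M, closedBall z r ⊆ closedBall (x - r • v) r := by
  intro y hy
  have key : ‖y - x‖ ^ 2 / (2 * r) ≤ -⟪v, y - x⟫ := by
    refine le_of_forall_mem_Ico_mul_le fun a ⟨ha₀, ha₁⟩ => ?_
    set t := a * (1 - a) * ‖x - y‖ ^ 2 / (2 * r) with ht
    have h := hnormal _ (smul_add_smul_add_smul_mem_iInter_closedBall hr ha₀ ha₁.le hx hy hv.le)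
    have e : a • x + (1 - a) • y + t • v - x = (1 - a) • (y - x) + t • v := by module
    rw [e, inner_add_right, real_inner_smul_right, real_inner_smul_right,
      real_inner_self_eq_norm_sq, hv, one_pow, mul_one, ht, norm_sub_rev,
      mul_div_assoc, mul_assoc] at h
    have h1a : 0 < 1 - a := sub_pos.2 ha₁
    nlinarith
  have hsq : ‖(y - x) + r • v‖ ^ 2 ≤ r ^ 2 := by
    rw [norm_add_sq_real, norm_smul, real_inner_smul_right, real_inner_comm, hv,
      Real.norm_of_nonneg hr.le]
    rw [div_le_iff₀ (by positivity)] at key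
    nlinarith
  rw [mem_closedBall_iff_norm, sub_sub_eq_add_sub, add_sub_right_comm]
  exact le_of_pow_le_pow_left₀ two_ne_zero hr.le hsq

end

theorem stmt_12_general (n : ℕ) (r : ℝ) (hr : 0 < r)
    (M Ω : Set (EuclideanSpace ℝ (Fin n)))
    (hΩ : Ω = ⋂ z ∈ M, Metric.closedBall z r)
    (x : EuclideanSpace ℝ (Fin n)) (hx : x ∈ frontier Ω)
    (v : EuclideanSpace ℝ (Fin n)) (hv : ‖v‖ = 1)
    (hnormal : ∀ y ∈ Ω, ⟪v, y - x⟫ ≤ 0) :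
    Ω ⊆ Metric.closedBall (x - r • v) r := by
  have hclosed : IsClosed Ω := hΩ ▸ isClosed_biInter fun z _ => isClosed_closedBall
  subst hΩ
  exact iInter_closedBall_subset_closedBall_sub_smul hr (hclosed.frontier_subset hx) hv hnormal

theorem stmt_12 (n : ℕ) (r : ℝ) (hr : 0 < r)
    (M Ω : Set (EuclideanSpace ℝ (Fin n)))
    (hΩ : Ω = ⋂ z ∈ M, Metric.closedBall z r)
    (hcpt : IsCompact Ω)
    (x : EuclideanSpace ℝ (Fin n)) (hx : x ∈ frontier Ω)
    (v : EuclideanSpace ℝ (Fin n)) (hv : ‖v‖ = 1)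
    (hnormal : ∀ y ∈ Ω, ⟪v, y - x⟫ ≤ 0) :
    Ω ⊆ Metric.closedBall (x - r • v) r :=
  stmt_12_general n r hr M Ω hΩ x hx v hv hnormal
end

section
/- Let Φ : U → V be a C¹,¹-diffeomorphism between open subsets of ℝⁿ (n ≥ 2), and let Ω ⊆ U be r-convex with Ω ≠ ℝⁿ. Assume that for each boundary point x of Ω there is a unit-length normal v to Ω at x such that for all ξ ⊥ v with ξ ≠ 0, limsup_{t→0⁺} ⟨v, Φ'(x)⁻¹(Φ'(x + tξ) − Φ'(x))ξ⟩ / t < ‖ξ‖²/r. Then Φ(Ω) is convex. -/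
open scoped RealInnerProductSpace
open Set Metric Filter Topology

/-!
`Φ '' Ω` is compact, and `Φ '' interior Ω` is open (inverse function theorem), path connected
and dense in it. At the image of a boundary point `x` with normal `v`, the functional
`w ↦ ⟪v, Φ'(x)⁻¹ w⟫` is negative on `Φ '' Ω \ {Φ x}` near `Φ x`: `r`-convexity gives
`⟪v, y - x⟫ ≤ -‖y - x‖² / (2r)`, and the curvature bound, made uniform over the compact sphere of
directions orthogonal to `v`, shows that `Φ` bends `Ω` by strictly less than this. Such a point
lies inside no segment contained in `Φ '' Ω`. Hence, as the endpoint of a segment issued from a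
point of `Φ '' interior Ω` moves along a path in `Φ '' interior Ω`, the segment stays in `Φ '' Ω`:
this property is closed, and open because the segment then even lies in `Φ '' interior Ω`.
Density gives convexity.
-/

section Segments

variable {E : Type*} [NormedAddCommGroup E] [NormedSpace ℝ E]

theorem continuous_lineMap_uncurry (p : E) :
    Continuous fun q : E × ℝ => AffineMap.lineMap p q.1 q.2 := by
  simp only [AffineMap.lineMap_apply_module']
  fun_prop

theorem isClosed_setOf_segment_subset {K : Set E} (hK : IsClosed K) (p : E) :
    IsClosed {b | segment ℝ p b ⊆ K} := by
  have : {b | segment ℝ p b ⊆ K} = ⋂ t ∈ Icc (0 : ℝ) 1, (AffineMap.lineMap p · t) ⁻¹' K := by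
    ext b
    simp only [segment_eq_image_lineMap, image_subset_iff, mem_ofPred_eq, mem_iInter₂]
    rfl
  rw [this]
  exact isClosed_biInter fun t _ =>
    hK.preimage ((continuous_lineMap_uncurry p).comp (Continuous.prodMk_left t))

theorem isOpen_setOf_segment_subset {O : Set E} (hO : IsOpen O) (p : E) :
    IsOpen {b | segment ℝ p b ⊆ O} := by
  simp only [isOpen_iff_mem_nhds, segment_eq_image_lineMap, image_subset_iff]
  intro b hb
  refine isCompact_Icc.eventually_forall_of_forall_eventually fun t ht => ?_
  exact (continuous_lineMap_uncurry p).continuousAt.preimage_mem_nhds (hO.mem_nhds (hb ht))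

def IsLocallyStrictlySupportedAt (K : Set E) (z : E) : Prop :=
  ∃ ℓ : E →L[ℝ] ℝ, ∀ᶠ w in 𝓝[K \ {z}] z, ℓ (w - z) < 0

theorem IsLocallyStrictlySupportedAt.notMem_openSegment {K : Set E} {z a b : E}
    (hz : IsLocallyStrictlySupportedAt K z) (hab : a ≠ b) (hK : segment ℝ a b ⊆ K) :
    z ∉ openSegment ℝ a b := by
  rintro hzab
  obtain ⟨ℓ, hℓ⟩ := hz
  rw [openSegment_eq_image_lineMap] at hzab
  obtain ⟨t, ⟨ht0, ht1⟩, rfl⟩ := hzab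
  -- Moving from `z` along `±(b - a)` stays in `K`, so `ℓ (b - a)` would have both signs.
  have hline : Tendsto (fun s : ℝ => AffineMap.lineMap a b (t + s)) (𝓝[≠] 0)
      (𝓝[K \ {AffineMap.lineMap a b t}] AffineMap.lineMap a b t) := by
    have hc : Continuous fun s : ℝ => AffineMap.lineMap a b (t + s) :=
      (AffineMap.lineMap_continuous).comp (continuous_const_add t)
    refine tendsto_nhdsWithin_iff.2 ⟨?_, ?_⟩
    · exact tendsto_nhdsWithin_of_tendsto_nhds (by simpa using hc.tendsto 0)
    · have hIcc : ∀ᶠ s in 𝓝 (0 : ℝ), t + s ∈ Icc (0 : ℝ) 1 :=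
        (continuous_const_add t).continuousAt.preimage_mem_nhds
          (Icc_mem_nhds (by simpa) (by simpa))
      filter_upwards [nhdsWithin_le_nhds hIcc, self_mem_nhdsWithin] with s hs hs0
      refine ⟨hK (segment_eq_image_lineMap ℝ a b ▸ mem_image_of_mem _ hs), ?_⟩
      simpa [AffineMap.lineMap_apply_module', sub_eq_zero, hab.symm] using hs0
  have hneg : ∀ᶠ s in 𝓝[≠] (0 : ℝ), s * ℓ (b - a) < 0 := by
    filter_upwards [hline.eventually hℓ] with s hs
    simpa [AffineMap.lineMap_apply_module', ← sub_smul] using hs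
  obtain ⟨s₁, hs₁, hs₁0⟩ := ((hneg.filter_mono (nhdsWithin_mono _ fun s hs => ne_of_gt hs)).and
    self_mem_nhdsWithin).exists (f := 𝓝[>] (0 : ℝ))
  obtain ⟨s₂, hs₂, hs₂0⟩ := ((hneg.filter_mono (nhdsWithin_mono _ fun s hs => ne_of_lt hs)).and
    self_mem_nhdsWithin).exists (f := 𝓝[<] (0 : ℝ))
  nlinarith [show (0 : ℝ) < s₁ from hs₁0, show s₂ < 0 from hs₂0]

variable {K O : Set E}

theorem segment_subset_of_isLocallyStrictlySupportedAt
    (hsupp : ∀ z ∈ K \ O, IsLocallyStrictlySupportedAt K z) {a b : E} (ha : a ∈ O) (hb : b ∈ O)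
    (hK : segment ℝ a b ⊆ K) : segment ℝ a b ⊆ O := by
  intro z hz
  by_contra hzO
  have hza : z ≠ a := fun h => hzO (h ▸ ha)
  have hzb : z ≠ b := fun h => hzO (h ▸ hb)
  have hab : a ≠ b := by rintro rfl; simp_all
  exact (hsupp z ⟨hK hz, hzO⟩).notMem_openSegment hab hK
    (mem_openSegment_of_ne_left_right hza.symm hzb.symm hz)

theorem JoinedIn.segment_subset (hK : IsClosed K) (hO : IsOpen O) (hOK : O ⊆ K)
    (hsupp : ∀ z ∈ K \ O, IsLocallyStrictlySupportedAt K z) {p q : E} (hpq : JoinedIn O p q) :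
    segment ℝ p q ⊆ K := by
  let γ := hpq.somePath
  let S : Set unitInterval := γ ⁻¹' {b | segment ℝ p b ⊆ K}
  have hS : S = γ ⁻¹' {b | segment ℝ p b ⊆ O} := by
    ext s
    exact ⟨segment_subset_of_isLocallyStrictlySupportedAt hsupp (hpq.mem.1)
      (hpq.somePath_mem s), fun h => h.trans hOK⟩
  have hclopen : IsClopen S :=
    ⟨(isClosed_setOf_segment_subset hK p).preimage γ.continuous,
      hS ▸ (isOpen_setOf_segment_subset hO p).preimage γ.continuous⟩
  have h0 : (0 : unitInterval) ∈ S := by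
    simpa [S] using hOK hpq.mem.1
  have h1 : (1 : unitInterval) ∈ S := hclopen.eq_univ ⟨0, h0⟩ ▸ mem_univ _
  simpa [S] using h1

theorem convex_of_isLocallyStrictlySupportedAt (hK : IsClosed K) (hO : IsOpen O)
    (hOc : IsPathConnected O) (hOK : O ⊆ K) (hKO : K ⊆ closure O)
    (hsupp : ∀ z ∈ K \ O, IsLocallyStrictlySupportedAt K z) : Convex ℝ K := by
  intro a ha b hb s t hs ht hst
  rw [← hK.closure_eq]
  refine map_mem_closure₂ (f := fun a b : E => s • a + t • b) (by fun_prop) (hKO ha) (hKO hb)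
    fun a ha b hb => ?_
  exact (hOc.joinedIn a ha b hb).segment_subset hK hO hOK hsupp ⟨s, t, hs, ht, hst, rfl⟩

end Segments

theorem IsCompact.eventually_nhdsWithin_image {X Y : Type*} [TopologicalSpace X]
    [TopologicalSpace Y] [T2Space Y] {K : Set X} (hK : IsCompact K) {f : X → Y}
    (hf : ContinuousOn f K) (hinj : InjOn f K) {x : X} (hx : x ∈ K) {p : Y → Prop}
    (h : ∀ᶠ y in 𝓝[K \ {x}] x, p (f y)) : ∀ᶠ w in 𝓝[f '' K \ {f x}] f x, p w := by
  obtain ⟨N, hN, hNx, hNp⟩ := mem_nhdsWithin.1 h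
  have hfar : IsClosed (f '' (K \ N)) :=
    ((hK.diff hN).image_of_continuousOn (hf.mono sdiff_subset)).isClosed
  have hfx : f x ∉ f '' (K \ N) := by
    rintro ⟨y, ⟨hyK, hyN⟩, hy⟩
    exact hyN (hinj hyK hx hy ▸ hNx)
  filter_upwards [mem_nhdsWithin_of_mem_nhds (hfar.isOpen_compl.mem_nhds hfx),
    self_mem_nhdsWithin] with w hw hwK
  obtain ⟨⟨y, hyK, rfl⟩, hyx⟩ := hwK
  have hyN : y ∈ N := by_contra fun hyN => hw ⟨y, ⟨hyK, hyN⟩, rfl⟩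
  exact hNp ⟨hyN, hyK, fun hyx' => hyx (hyx' ▸ rfl)⟩

section InverseFunction

variable {E F : Type*} [NormedAddCommGroup E] [NormedSpace ℝ E] [CompleteSpace E]
  [NormedAddCommGroup F] [NormedSpace ℝ F]

theorem isOpen_image_of_hasFDerivAt_equiv {U : Set E} (hU : IsOpen U) {Φ : E → F}
    {Φ' : E → E ≃L[ℝ] F} (hd : ∀ x ∈ U, HasFDerivAt Φ (Φ' x : E →L[ℝ] F) x)
    (hc : ContinuousOn (fun x => (Φ' x : E →L[ℝ] F)) U) {s : Set E} (hs : IsOpen s)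
    (hsU : s ⊆ U) : IsOpen (Φ '' s) := by
  rw [isOpen_iff_mem_nhds]
  rintro _ ⟨y, hy, rfl⟩
  have hstrict : HasStrictFDerivAt Φ (Φ' y : E →L[ℝ] F) y :=
    hasStrictFDerivAt_of_hasFDerivAt_of_continuousAt
      (eventually_of_mem (hU.mem_nhds (hsU hy)) hd) (hc.continuousAt (hU.mem_nhds (hsU hy)))
  rw [← hstrict.map_nhds_eq_of_equiv]
  exact image_mem_map (hs.mem_nhds hy)

end InverseFunction

theorem isCompact_of_eq_iInter_closedBall {X : Type*} [PseudoMetricSpace X] [ProperSpace X]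
    {M Ω : Set X} {r : ℝ} (hΩ : Ω = ⋂ z ∈ M, closedBall z r)
    (hM : M.Nonempty) : IsCompact Ω := by
  obtain ⟨z, hz⟩ := hM
  exact (isCompact_closedBall z r).of_isClosed_subset
    (hΩ ▸ isClosed_biInter fun z _ => isClosed_closedBall) (hΩ ▸ biInter_subset_of_mem hz)

section RConvex

variable {E : Type*} [NormedAddCommGroup E] [InnerProductSpace ℝ E]

theorem norm_add_smul_sub_sub_sq (x y z : E) (l : ℝ) :
    ‖x + l • (y - x) - z‖ ^ 2 =
      (1 - l) * ‖x - z‖ ^ 2 + l * ‖y - z‖ ^ 2 - l * (1 - l) * ‖x - y‖ ^ 2 := by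
  have hx : x + l • (y - x) - z = (x - z) + l • ((y - z) - (x - z)) := by module
  have hxy : x - y = (x - z) - (y - z) := by abel
  rw [hx, hxy]
  generalize x - z = a
  generalize y - z = b
  simp only [← real_inner_self_eq_norm_sq, inner_add_left, inner_add_right, inner_sub_left,
    inner_sub_right, real_inner_smul_left, real_inner_smul_right, real_inner_comm a b]
  ring

variable {M Ω : Set E} {r : ℝ}

theorem closedBall_subset_of_eq_iInter_closedBall (hr : 0 < r)
    (hΩ : Ω = ⋂ z ∈ M, closedBall z r) {x y : E} (hx : x ∈ Ω) (hy : y ∈ Ω) {l : ℝ}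
    (hl : l ∈ Icc (0 : ℝ) 1) :
    closedBall (x + l • (y - x)) (l * (1 - l) * ‖y - x‖ ^ 2 / (2 * r)) ⊆ Ω := by
  intro w hw
  set ρ := l * (1 - l) * ‖y - x‖ ^ 2 / (2 * r)
  simp only [hΩ, mem_iInter₂, mem_closedBall, dist_eq_norm] at hx hy hw ⊢
  intro z hz
  have hq : l * (1 - l) * ‖y - x‖ ^ 2 = 2 * r * ρ := by
    simp only [ρ]
    field_simp
  have hmz : ‖x + l • (y - x) - z‖ ^ 2 ≤ r ^ 2 - 2 * r * ρ := by
    have hxz := pow_le_pow_left₀ (norm_nonneg _) (hx z hz) 2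
    have hyz := pow_le_pow_left₀ (norm_nonneg _) (hy z hz) 2
    rw [norm_add_smul_sub_sub_sq, norm_sub_rev x y, hq]
    nlinarith [hl.1, hl.2]
  have hρ : 0 ≤ ρ := by have := hl.1; have := hl.2; positivity
  have hmz' : ‖x + l • (y - x) - z‖ ≤ r - ρ :=
    pow_le_pow_iff_left₀ (norm_nonneg _) (by nlinarith [sq_nonneg ‖x + l • (y - x) - z‖])
      two_ne_zero |>.1 (by nlinarith)
  calc ‖w - z‖ ≤ ‖w - (x + l • (y - x))‖ + ‖x + l • (y - x) - z‖ :=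
        norm_sub_le_norm_sub_add_norm_sub _ _ _
    _ ≤ ρ + (r - ρ) := add_le_add hw hmz'
    _ = r := by ring

theorem inner_sub_le_of_eq_iInter_closedBall (hr : 0 < r) (hΩ : Ω = ⋂ z ∈ M, closedBall z r)
    {x v : E} (hx : x ∈ Ω) (hv : ‖v‖ = 1) (hnormal : ∀ y ∈ Ω, ⟪v, y - x⟫ ≤ 0) {y : E}
    (hy : y ∈ Ω) : ⟪v, y - x⟫ ≤ -‖y - x‖ ^ 2 / (2 * r) := by
  -- Push the ball centred at `x + l • (y - x)` in the direction `v`, then let `l → 0`.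
  have hlt : ∀ l ∈ Ioo (0 : ℝ) 1, ⟪v, y - x⟫ ≤ -((1 - l) * ‖y - x‖ ^ 2 / (2 * r)) := by
    intro l hl
    have hball := closedBall_subset_of_eq_iInter_closedBall hr hΩ hx hy (Ioo_subset_Icc_self hl)
    set ρ := l * (1 - l) * ‖y - x‖ ^ 2 / (2 * r)
    have hρ : 0 ≤ ρ := by have := hl.1; have := hl.2; positivity
    have hpush := hnormal (x + l • (y - x) + ρ • v) (hball (by
      simp [norm_smul, hv, abs_of_nonneg hρ]))
    have hexp : ⟪v, x + l • (y - x) + ρ • v - x⟫ = l * ⟪v, y - x⟫ + ρ := by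
      rw [add_sub_right_comm, add_sub_cancel_left, inner_add_right, real_inner_smul_right,
        real_inner_smul_right, real_inner_self_eq_norm_sq, hv]
      ring
    have hρ' : ρ = l * ((1 - l) * ‖y - x‖ ^ 2 / (2 * r)) := by ring
    rw [hexp, hρ'] at hpush
    nlinarith [hl.1]
  have hlim : Tendsto (fun l : ℝ => -((1 - l) * ‖y - x‖ ^ 2 / (2 * r))) (𝓝[>] 0)
      (𝓝 (-‖y - x‖ ^ 2 / (2 * r))) := by
    have hc : Continuous fun l : ℝ => -((1 - l) * ‖y - x‖ ^ 2 / (2 * r)) := by fun_prop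
    exact (hc.tendsto' 0 _ (by ring)).mono_left nhdsWithin_le_nhds
  exact ge_of_tendsto hlim (eventually_of_mem (Ioo_mem_nhdsGT zero_lt_one) hlt)

theorem interior_nonempty_of_eq_iInter_closedBall (hr : 0 < r)
    (hΩ : Ω = ⋂ z ∈ M, closedBall z r) {x y : E} (hx : x ∈ Ω) (hy : y ∈ Ω) (hxy : x ≠ y) :
    (interior Ω).Nonempty := by
  have hball := closedBall_subset_of_eq_iInter_closedBall hr hΩ hx hy (l := 1 / 2) (by norm_num)
  have hρ : 0 < 1 / 2 * (1 - 1 / 2) * ‖y - x‖ ^ 2 / (2 * r) := by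
    have := norm_pos_iff.2 (sub_ne_zero.2 hxy.symm)
    positivity
  exact ⟨_, mem_interior.2 ⟨_, ball_subset_closedBall.trans hball, isOpen_ball, mem_ball_self hρ⟩⟩

end RConvex

theorem le_add_add_half_of_hasDerivAt_le {f f' : ℝ → ℝ} {a κ : ℝ}
    (hf : ∀ t ∈ Icc (0 : ℝ) 1, HasDerivAt f (f' t) t)
    (hf' : ∀ t ∈ Ico (0 : ℝ) 1, f' t ≤ a + κ * t) :
    f 1 ≤ f 0 + a + κ / 2 := by
  have hB : ∀ t, HasDerivAt (fun t => f 0 + a * t + κ / 2 * t ^ 2) (a + κ * t) t := fun t =>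
    ((((hasDerivAt_id t).const_mul a).const_add (f 0)).add
      ((hasDerivAt_pow 2 t).const_mul (κ / 2))).congr_deriv (by push_cast; ring)
  have := image_le_of_deriv_right_le_deriv_boundary (a := 0) (b := 1) (f' := f')
    (fun t ht => (hf t ht).continuousAt.continuousWithinAt)
    (fun t ht => (hf t (Ico_subset_Icc_self ht)).hasDerivWithinAt) (by simp)
    (fun t _ => (hB t).continuousAt.continuousWithinAt) (fun t _ => (hB t).hasDerivWithinAt) hf'
    (right_mem_Icc.2 zero_le_one)
  linarith

section SecondOrder

variable {E F : Type*} [NormedAddCommGroup E] [NormedSpace ℝ E] [NormedAddCommGroup F]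
  [NormedSpace ℝ F] {T : E → E →L[ℝ] F} {L : NNReal} {W : Set E}

theorem LipschitzOnWith.norm_apply_sub_apply_le (hT : LipschitzOnWith L T W) {a b : E}
    (ha : a ∈ W) (hb : b ∈ W) (ζ : E) : ‖T a ζ - T b ζ‖ ≤ L * ‖a - b‖ * ‖ζ‖ := by
  calc ‖T a ζ - T b ζ‖ = ‖(T a - T b) ζ‖ := rfl
    _ ≤ ‖T a - T b‖ * ‖ζ‖ := (T a - T b).le_opNorm ζ
    _ ≤ L * ‖a - b‖ * ‖ζ‖ := by
      gcongr
      simpa [dist_eq_norm] using hT.dist_le_mul a ha b hb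

theorem LipschitzOnWith.apply_sub_le_apply_sub_add (hT : LipschitzOnWith L T W)
    (ℓ : F →L[ℝ] ℝ) {x ξ η : E} {t : ℝ} (ht : 0 ≤ t) (hx : x ∈ W) (hξ : x + t • ξ ∈ W)
    (hη : x + t • η ∈ W) :
    ℓ (T (x + t • ξ) ξ - T x ξ) ≤
      ℓ (T (x + t • η) η - T x η) + ‖ℓ‖ * L * t * ‖ξ - η‖ * (‖ξ‖ + ‖η‖) := by
  have hsplit : (T (x + t • ξ) ξ - T x ξ) - (T (x + t • η) η - T x η) =
      (T (x + t • ξ) ξ - T (x + t • η) ξ) + (T (x + t • η) (ξ - η) - T x (ξ - η)) := by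
    simp only [map_sub]
    abel
  have h₁ := hT.norm_apply_sub_apply_le hξ hη ξ
  have h₂ := hT.norm_apply_sub_apply_le hη hx (ξ - η)
  rw [add_sub_add_left_eq_sub, ← smul_sub, norm_smul, Real.norm_of_nonneg ht] at h₁
  rw [add_sub_cancel_left, norm_smul, Real.norm_of_nonneg ht] at h₂
  have hdiff : ‖(T (x + t • ξ) ξ - T x ξ) - (T (x + t • η) η - T x η)‖ ≤
      L * t * ‖ξ - η‖ * (‖ξ‖ + ‖η‖) := by
    rw [hsplit]
    refine (norm_add_le _ _).trans ?_
    nlinarith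
  have hℓ := (le_abs_self _).trans
    (ℓ.le_opNorm ((T (x + t • ξ) ξ - T x ξ) - (T (x + t • η) η - T x η)))
  rw [map_sub] at hℓ
  nlinarith [norm_nonneg ℓ]

theorem LipschitzOnWith.eventually_apply_sub_div_le (hT : LipschitzOnWith L T W) (ℓ : F →L[ℝ] ℝ)
    {x : E} (hW : W ∈ 𝓝 x) (ξ : E) :
    ∀ᶠ t in 𝓝[>] 0, ℓ (T (x + t • ξ) ξ - T x ξ) / t ≤ ‖ℓ‖ * L * ‖ξ‖ ^ 2 := by
  have hline : ∀ᶠ t in 𝓝[>] (0 : ℝ), x + t • ξ ∈ W := by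
    have : Tendsto (fun t : ℝ => x + t • ξ) (𝓝 0) (𝓝 x) :=
      Continuous.tendsto' (by fun_prop) 0 x (by simp)
    exact (this.mono_left nhdsWithin_le_nhds).eventually hW
  filter_upwards [hline, self_mem_nhdsWithin] with t htW ht
  have h := hT.apply_sub_le_apply_sub_add ℓ (le_of_lt ht) (mem_of_mem_nhds hW) htW
    (η := 0) (by simpa using mem_of_mem_nhds hW)
  rw [div_le_iff₀ ht]
  simp only [map_zero, sub_self, smul_zero, add_zero, sub_zero, norm_zero] at h
  nlinarith

theorem LipschitzOnWith.exists_eventually_forall_ball_le (hT : LipschitzOnWith L T W)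
    (ℓ : F →L[ℝ] ℝ) {x : E} (hW : W ∈ 𝓝 x) {ξ : E} {b : ℝ}
    (hξ : limsup (fun t : ℝ => ℓ (T (x + t • ξ) ξ - T x ξ) / t) (𝓝[>] 0) < b) :
    ∃ c < b, ∃ ε > 0, ∀ᶠ t in 𝓝[>] 0, ∀ η ∈ ball ξ ε, ℓ (T (x + t • η) η - T x η) ≤ c * t := by
  obtain ⟨c', hc'ξ, hc'b⟩ := exists_between hξ
  have hev := eventually_lt_of_limsup_lt hc'ξ
    (isBoundedUnder_of_eventually_le (hT.eventually_apply_sub_div_le ℓ hW ξ))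
  obtain ⟨ρ, hρ, hρW⟩ := Metric.mem_nhds_iff.1 hW
  set K := ‖ℓ‖ * L * (2 * ‖ξ‖ + 1)
  have hK : 0 ≤ K := by positivity
  set ε := min 1 ((b - c') / (2 * (K + 1)))
  have hε : 0 < ε := lt_min one_pos (div_pos (by linarith) (by positivity))
  have hKε : K * ε ≤ (b - c') / 2 := by
    have := min_le_right 1 ((b - c') / (2 * (K + 1)))
    rw [le_div_iff₀ (by positivity)] at this
    nlinarith
  refine ⟨(c' + b) / 2, by linarith, ε, hε, ?_⟩
  filter_upwards [hev, Ioo_mem_nhdsGT (show 0 < ρ / (‖ξ‖ + 1) by positivity)] with t htξ ht η hη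
  have hηξ : ‖η - ξ‖ < ε := by rwa [← dist_eq_norm]
  have hη1 : ‖η‖ ≤ ‖ξ‖ + 1 := by
    have := norm_le_insert' η ξ
    linarith [min_le_left 1 ((b - c') / (2 * (K + 1)))]
  have hmem : ∀ ζ : E, ‖ζ‖ ≤ ‖ξ‖ + 1 → x + t • ζ ∈ W := fun ζ hζ => hρW <| by
    rw [mem_ball, dist_eq_norm, add_sub_cancel_left, norm_smul, Real.norm_of_nonneg ht.1.le]
    calc t * ‖ζ‖ ≤ t * (‖ξ‖ + 1) := by gcongr; exact ht.1.le
      _ < ρ := (lt_div_iff₀ (by positivity)).1 ht.2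
  have h := hT.apply_sub_le_apply_sub_add ℓ ht.1.le (mem_of_mem_nhds hW) (hmem η hη1)
    (hmem ξ (by linarith))
  rw [div_lt_iff₀ ht.1] at htξ
  have hKt : ‖ℓ‖ * L * t * ‖η - ξ‖ * (‖η‖ + ‖ξ‖) ≤ t * (K * ε) := by
    have hA : 0 ≤ ‖ℓ‖ * L * t := mul_nonneg (by positivity) ht.1.le
    calc ‖ℓ‖ * L * t * ‖η - ξ‖ * (‖η‖ + ‖ξ‖)
        = ‖ℓ‖ * L * t * (‖η - ξ‖ * (‖η‖ + ‖ξ‖)) := by ring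
      _ ≤ ‖ℓ‖ * L * t * (ε * (2 * ‖ξ‖ + 1)) :=
          mul_le_mul_of_nonneg_left (mul_le_mul hηξ.le (by linarith) (by positivity) hε.le) hA
      _ = t * (K * ε) := by ring
  nlinarith [ht.1]

theorem LipschitzOnWith.exists_eventually_forall_le_of_limsup_lt (hT : LipschitzOnWith L T W)
    (ℓ : F →L[ℝ] ℝ) {x : E} (hW : W ∈ 𝓝 x) {P : Set E} (hP : IsCompact P) {b : ℝ}
    (hlim : ∀ ξ ∈ P, limsup (fun t : ℝ => ℓ (T (x + t • ξ) ξ - T x ξ) / t) (𝓝[>] 0) < b) :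
    ∃ c < b, ∀ᶠ t in 𝓝[>] 0, ∀ ξ ∈ P, ℓ (T (x + t • ξ) ξ - T x ξ) ≤ c * t := by
  refine hP.induction_on (p := fun S => ∃ c < b, ∀ᶠ t in 𝓝[>] 0, ∀ ξ ∈ S,
    ℓ (T (x + t • ξ) ξ - T x ξ) ≤ c * t) ⟨b - 1, by linarith, by simp⟩ ?_ ?_ ?_
  · rintro S S' hSS' ⟨c, hcb, hc⟩
    exact ⟨c, hcb, hc.mono fun t ht ξ hξ => ht ξ (hSS' hξ)⟩
  · rintro S S' ⟨c, hcb, hc⟩ ⟨c', hc'b, hc'⟩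
    refine ⟨max c c', max_lt hcb hc'b, ?_⟩
    filter_upwards [hc, hc', self_mem_nhdsWithin] with t ht ht' (htpos : 0 < t)
    rintro ξ (hξ | hξ)
    · exact (ht ξ hξ).trans (by gcongr; exact le_max_left _ _)
    · exact (ht' ξ hξ).trans (by gcongr; exact le_max_right _ _)
  · intro ξ hξ
    obtain ⟨c, hcb, ε, hε, hc⟩ := hT.exists_eventually_forall_ball_le ℓ hW (hlim ξ hξ)
    exact ⟨ball ξ ε, mem_nhdsWithin_of_mem_nhds (ball_mem_nhds ξ hε), c, hcb, hc⟩

theorem exists_forall_apply_sub_le_mul_sq {ℓ : F →L[ℝ] ℝ} {x : E} {c : ℝ} {S : Submodule ℝ E}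
    (h : ∀ᶠ t in 𝓝[>] 0, ∀ ξ ∈ sphere (0 : E) 1 ∩ S, ℓ (T (x + t • ξ) ξ - T x ξ) ≤ c * t) :
    ∃ δ > 0, ∀ ξ ∈ S, ‖ξ‖ < δ → ∀ t ∈ Icc (0 : ℝ) 1,
      ℓ (T (x + t • ξ) ξ - T x ξ) ≤ c * t * ‖ξ‖ ^ 2 := by
  obtain ⟨δ, hδ, hsub⟩ := mem_nhdsGT_iff_exists_Ioo_subset.1 h
  refine ⟨δ, hδ, fun ξ hξS hξδ t ht => ?_⟩
  rcases eq_or_ne ξ 0 with rfl | hξ0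
  · simp
  rcases ht.1.eq_or_lt with rfl | ht0
  · simp
  have hξ : 0 < ‖ξ‖ := norm_pos_iff.2 hξ0
  have hu : ‖ξ‖⁻¹ • ξ ∈ sphere (0 : E) 1 ∩ S :=
    ⟨by simp [norm_smul, hξ.ne'], S.smul_mem _ hξS⟩
  have hτ : t * ‖ξ‖ ∈ Ioo 0 δ := ⟨by positivity, by nlinarith [ht.2]⟩
  have key := hsub hτ _ hu
  rw [smul_smul, mul_assoc, mul_inv_cancel₀ hξ.ne', mul_one, map_smul, map_smul, ← smul_sub,
    map_smul, smul_eq_mul, inv_mul_le_iff₀ hξ] at key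
  linarith

theorem apply_sub_le_of_hasFDerivAt_of_lipschitzOnWith {Φ : E → F} {x : E} {ρ : ℝ}
    (hd : ∀ y ∈ ball x ρ, HasFDerivAt Φ (T y) y) (hT : LipschitzOnWith L T (ball x ρ))
    (ℓ : F →L[ℝ] ℝ) {c : ℝ} {h ξ : E}
    (hξ : ∀ t ∈ Icc (0 : ℝ) 1, ℓ (T (x + t • ξ) ξ - T x ξ) ≤ c * t * ‖ξ‖ ^ 2)
    (hξh : ‖ξ‖ ≤ ‖h‖) (hh : ‖h‖ < ρ) :
    ℓ (Φ (x + h) - Φ x) ≤ ℓ (T x h) + c * ‖ξ‖ ^ 2 / 2 + ‖ℓ‖ * L * ‖h - ξ‖ * ‖h‖ := by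
  have hmem : ∀ t ∈ Icc (0 : ℝ) 1, ∀ ζ : E, ‖ζ‖ ≤ ‖h‖ → x + t • ζ ∈ ball x ρ := by
    intro t ht ζ hζ
    rw [mem_ball, dist_eq_norm, add_sub_cancel_left, norm_smul, Real.norm_of_nonneg ht.1]
    nlinarith [ht.2, norm_nonneg ζ]
  have hx : x ∈ ball x ρ := mem_ball_self ((norm_nonneg h).trans_lt hh)
  have hderiv : ∀ t ∈ Icc (0 : ℝ) 1,
      HasDerivAt (fun t : ℝ => ℓ (Φ (x + t • h))) (ℓ (T (x + t • h) h)) t := by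
    intro t ht
    have hline : HasDerivAt (fun t : ℝ => x + t • h) h t := by
      simpa using ((hasDerivAt_id t).smul_const h).const_add x
    exact ℓ.hasFDerivAt.comp_hasDerivAt t
      ((hd _ (hmem t ht h le_rfl)).comp_hasDerivAt t hline)
  have hbound : ∀ t ∈ Ico (0 : ℝ) 1, ℓ (T (x + t • h) h) ≤
      ℓ (T x h) + (c * ‖ξ‖ ^ 2 + 2 * (‖ℓ‖ * L * ‖h - ξ‖ * ‖h‖)) * t := by
    intro t ht
    have ht' := Ico_subset_Icc_self ht
    have hcomp := hT.apply_sub_le_apply_sub_add ℓ ht.1 hx (hmem t ht' h le_rfl)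
      (hmem t ht' ξ hξh)
    have hsum : ‖h‖ + ‖ξ‖ ≤ 2 * ‖h‖ := by linarith
    have hA : 0 ≤ ‖ℓ‖ * L * t * ‖h - ξ‖ :=
      mul_nonneg (mul_nonneg (by positivity) ht.1) (norm_nonneg _)
    rw [map_sub] at hcomp
    nlinarith [hξ t ht', mul_le_mul_of_nonneg_left hsum hA]
  have := le_add_add_half_of_hasDerivAt_le hderiv hbound
  simp only [one_smul, zero_smul, add_zero] at this
  rw [map_sub]
  linarith

end SecondOrder

section Curvature

variable {E : Type*} [NormedAddCommGroup E] [InnerProductSpace ℝ E]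

theorem eventually_apply_sub_neg {F : Type*} [NormedAddCommGroup F] [NormedSpace ℝ F]
    {Φ : E → F} {T : E → E →L[ℝ] F} {L : NNReal} {x v : E} {W Ω : Set E} {r c δ : ℝ}
    (hW : W ∈ 𝓝 x) (hd : ∀ y ∈ W, HasFDerivAt Φ (T y) y) (hT : LipschitzOnWith L T W)
    (ℓ : F →L[ℝ] ℝ) (hℓ : ∀ w, ℓ (T x w) = ⟪v, w⟫) (hv : ‖v‖ = 1)
    (hr : 0 < r) (hc : 0 ≤ c) (hcr : c * r < 1) (hδ : 0 < δ)
    (hunif : ∀ ξ ∈ (ℝ ∙ v)ᗮ, ‖ξ‖ < δ → ∀ t ∈ Icc (0 : ℝ) 1,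
      ℓ (T (x + t • ξ) ξ - T x ξ) ≤ c * t * ‖ξ‖ ^ 2)
    (hsupp : ∀ y ∈ Ω, ⟪v, y - x⟫ ≤ -‖y - x‖ ^ 2 / (2 * r)) :
    ∀ᶠ y in 𝓝[Ω \ {x}] x, ℓ (Φ y - Φ x) < 0 := by
  obtain ⟨ρ, hρ, hρW⟩ := Metric.mem_nhds_iff.1 hW
  set ε := min (min ρ δ) ((1 - c * r) / (‖ℓ‖ * L + 1))
  have hε : 0 < ε := lt_min (lt_min hρ hδ) (div_pos (by linarith) (by positivity))
  have hερ : ε ≤ ρ := (min_le_left _ _).trans (min_le_left _ _)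
  have hεδ : ε ≤ δ := (min_le_left _ _).trans (min_le_right _ _)
  filter_upwards [mem_nhdsWithin_of_mem_nhds (ball_mem_nhds x hε), self_mem_nhdsWithin]
    with y hyε hy
  obtain ⟨hyΩ, hyx⟩ := hy
  -- With `y - x = ξ + s • v`, `ξ ⊥ v`, the support inequality `‖y - x‖² ≤ 2 r (-s)` makes the
  -- second-order term `c ‖ξ‖² / 2 ≤ c r (-s)` smaller than the first-order term `-s`.
  set h := y - x
  set s := ⟪v, h⟫
  set ξ := h - s • v
  have hhε : ‖h‖ < ε := by rwa [← dist_eq_norm]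
  have hh : 0 < ‖h‖ := norm_pos_iff.2 (sub_ne_zero.2 hyx)
  have hs : ‖h‖ ^ 2 ≤ 2 * r * -s := by
    have := hsupp y hyΩ
    rw [le_div_iff₀ (by positivity)] at this
    linarith
  have hs0 : 0 < -s := by nlinarith
  have hξv : ξ ∈ (ℝ ∙ v)ᗮ := by
    rw [Submodule.mem_orthogonal_singleton_iff_inner_right, inner_sub_right,
      real_inner_smul_right, real_inner_self_eq_norm_sq, hv]
    ring
  have hhξ : ‖h - ξ‖ = -s := by
    rw [sub_sub_cancel, norm_smul, hv, mul_one, Real.norm_eq_abs, abs_of_neg (by linarith)]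
  have hξ2 : ‖ξ‖ ^ 2 = ‖h‖ ^ 2 - s ^ 2 := by
    rw [norm_sub_sq_real, real_inner_smul_right, real_inner_comm, norm_smul, hv,
      Real.norm_eq_abs, mul_one, sq_abs]
    ring
  have hξh : ‖ξ‖ ≤ ‖h‖ := by nlinarith [norm_nonneg ξ]
  have hmain := apply_sub_le_of_hasFDerivAt_of_lipschitzOnWith (fun z hz => hd z (hρW hz))
    (hT.mono hρW) ℓ (hunif ξ hξv ((hξh.trans_lt hhε).trans_le hεδ)) hξh (hhε.trans_le hερ)
  rw [add_sub_cancel, hℓ, hhξ] at hmain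
  have hℓh : (‖ℓ‖ * L + 1) * ‖h‖ < 1 - c * r :=
    (lt_div_iff₀' (by positivity)).1 (hhε.trans_le (min_le_right _ _))
  nlinarith [mul_le_mul_of_nonneg_left hξh (norm_nonneg ξ)]

theorem eventually_inner_symm_sub_neg [FiniteDimensional ℝ E] {Φ : E → E} {Φ' : E → E ≃L[ℝ] E}
    {L : NNReal} {x v : E} {W Ω : Set E} {r : ℝ} (hW : W ∈ 𝓝 x)
    (hd : ∀ y ∈ W, HasFDerivAt Φ (Φ' y : E →L[ℝ] E) y)
    (hL : LipschitzOnWith L (fun y => (Φ' y : E →L[ℝ] E)) W) (hr : 0 < r) (hv : ‖v‖ = 1)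
    (hsupp : ∀ y ∈ Ω, ⟪v, y - x⟫ ≤ -‖y - x‖ ^ 2 / (2 * r))
    (hcurv : ∀ ξ : E, ⟪ξ, v⟫ = 0 → ξ ≠ 0 →
      limsup (fun t : ℝ => ⟪v, (Φ' x).symm (Φ' (x + t • ξ) ξ - Φ' x ξ)⟫ / t) (𝓝[>] 0) <
        ‖ξ‖ ^ 2 / r) :
    ∀ᶠ y in 𝓝[Ω \ {x}] x, ⟪v, (Φ' x).symm (Φ y - Φ x)⟫ < 0 := by
  set ℓ : E →L[ℝ] ℝ := (innerSL ℝ v).comp ((Φ' x).symm : E →L[ℝ] E)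
  have hP : IsCompact (sphere (0 : E) 1 ∩ (ℝ ∙ v)ᗮ) :=
    (isCompact_sphere 0 1).inter_right (Submodule.isClosed_orthogonal _)
  obtain ⟨c, hcr, hc⟩ := hL.exists_eventually_forall_le_of_limsup_lt ℓ hW hP (b := 1 / r)
    fun ξ ⟨hξ1, hξv⟩ => by
      rw [mem_sphere_zero_iff_norm] at hξ1
      have := hcurv ξ (Submodule.mem_orthogonal_singleton_iff_inner_left.1 hξv)
        (norm_ne_zero_iff.1 (by simp [hξ1]))
      rwa [hξ1, one_pow] at this
  obtain ⟨δ, hδ, hδc⟩ := exists_forall_apply_sub_le_mul_sq (S := (ℝ ∙ v)ᗮ)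
    (T := fun y => (Φ' y : E →L[ℝ] E)) hc
  have hc0 : max c 0 * r < 1 := (lt_div_iff₀ hr).1 (max_lt hcr (one_div_pos.2 hr))
  have hℓ : ∀ w, ℓ (Φ' x w) = ⟪v, w⟫ := fun w => by simp [ℓ]
  exact eventually_apply_sub_neg hW hd hL ℓ hℓ hv hr (le_max_right c 0) hc0 hδ
    (fun ξ hξ hξδ t ht => (hδc ξ hξ hξδ t ht).trans (by gcongr; exacts [ht.1, le_max_left c 0]))
    hsupp

theorem isLocallyStrictlySupportedAt_image_of_eq_iInter_closedBall [FiniteDimensional ℝ E]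
    {Φ : E → E} {Φ' : E → E ≃L[ℝ] E} {L : NNReal} {W M Ω : Set E} {r : ℝ} {x v : E}
    (hr : 0 < r) (hΩ : Ω = ⋂ z ∈ M, closedBall z r) (hΩc : IsCompact Ω) (hΦ : ContinuousOn Φ Ω)
    (hinj : InjOn Φ Ω) (hx : x ∈ Ω) (hW : W ∈ 𝓝 x)
    (hd : ∀ y ∈ W, HasFDerivAt Φ (Φ' y : E →L[ℝ] E) y)
    (hL : LipschitzOnWith L (fun y => (Φ' y : E →L[ℝ] E)) W) (hv : ‖v‖ = 1)
    (hnormal : ∀ y ∈ Ω, ⟪v, y - x⟫ ≤ 0)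
    (hcurv : ∀ ξ : E, ⟪ξ, v⟫ = 0 → ξ ≠ 0 →
      limsup (fun t : ℝ => ⟪v, (Φ' x).symm (Φ' (x + t • ξ) ξ - Φ' x ξ)⟫ / t) (𝓝[>] 0) <
        ‖ξ‖ ^ 2 / r) :
    IsLocallyStrictlySupportedAt (Φ '' Ω) (Φ x) :=
  ⟨(innerSL ℝ v).comp ((Φ' x).symm : E →L[ℝ] E), hΩc.eventually_nhdsWithin_image hΦ hinj hx <|
    eventually_inner_symm_sub_neg hW hd hL hr hv
      (fun _ hy => inner_sub_le_of_eq_iInter_closedBall hr hΩ hx hv hnormal hy) hcurv⟩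

end Curvature

theorem stmt_13_general (n : ℕ)
    (U V : Set (EuclideanSpace ℝ (Fin n))) (hU : IsOpen U)
    (Φ : EuclideanSpace ℝ (Fin n) → EuclideanSpace ℝ (Fin n))
    (Φ' : EuclideanSpace ℝ (Fin n) →
      (EuclideanSpace ℝ (Fin n) ≃L[ℝ] EuclideanSpace ℝ (Fin n)))
    -- Φ is a C¹,¹-diffeomorphism of U onto V with derivative Φ'
    (hbij : Set.BijOn Φ U V)
    (hd : ∀ x ∈ U, HasFDerivAt Φ (Φ' x : EuclideanSpace ℝ (Fin n) →L[ℝ]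
      EuclideanSpace ℝ (Fin n)) x)
    (hlip : ∀ x ∈ U, ∃ (L : NNReal) (W : Set (EuclideanSpace ℝ (Fin n))),
      W ∈ nhds x ∧ LipschitzOnWith L (fun y =>
        (Φ' y : EuclideanSpace ℝ (Fin n) →L[ℝ] EuclideanSpace ℝ (Fin n))) W)
    -- Ω is r-convex, Ω ⊆ U, Ω ≠ ℝⁿ
    (r : ℝ) (hr : 0 < r) (M Ω : Set (EuclideanSpace ℝ (Fin n)))
    (hΩ : Ω = ⋂ z ∈ M, Metric.closedBall z r)
    (hΩU : Ω ⊆ U) (hΩne : Ω ≠ Set.univ)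
    -- the curvature condition at every boundary point
    (hcond : ∀ x ∈ frontier Ω, ∃ v : EuclideanSpace ℝ (Fin n), ‖v‖ = 1 ∧
      (∀ y ∈ Ω, ⟪v, y - x⟫ ≤ 0) ∧
      ∀ ξ : EuclideanSpace ℝ (Fin n), ⟪ξ, v⟫ = 0 → ξ ≠ 0 →
        Filter.limsup (fun t : ℝ =>
            ⟪v, (Φ' x).symm (Φ' (x + t • ξ) ξ - Φ' x ξ)⟫ / t)
          (nhdsWithin 0 (Set.Ioi 0)) < ‖ξ‖ ^ 2 / r) :
    Convex ℝ (Φ '' Ω) := by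
  have hΩconv : Convex ℝ Ω := hΩ ▸ convex_iInter₂ fun z _ => convex_closedBall z r
  have hΩc : IsCompact Ω := isCompact_of_eq_iInter_closedBall hΩ
    (nonempty_iff_ne_empty.2 fun hM => hΩne (by simp [hΩ, hM]))
  have hΦ : ContinuousOn Φ U := fun x hx => (hd x hx).continuousAt.continuousWithinAt
  rcases Ω.subsingleton_or_nontrivial with hsub | ⟨a, ha, b, hb, hab⟩
  · exact (hsub.image Φ).convex
  have hint := interior_nonempty_of_eq_iInter_closedBall hr hΩ ha hb hab
  have hintU : interior Ω ⊆ U := interior_subset.trans hΩU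
  refine convex_of_isLocallyStrictlySupportedAt (O := Φ '' interior Ω)
    (hΩc.image_of_continuousOn (hΦ.mono hΩU)).isClosed ?_
    ((hΩconv.interior.isPathConnected hint).image' (hΦ.mono hintU)) (image_mono interior_subset)
    ?_ ?_
  · refine isOpen_image_of_hasFDerivAt_equiv hU hd (fun x hx => ?_) isOpen_interior hintU
    obtain ⟨L, W, hW, hL⟩ := hlip x hx
    exact (hL.continuousOn.continuousAt hW).continuousWithinAt
  · have hcl : closure (interior Ω) = Ω := by
      rw [hΩconv.closure_interior_eq_closure_of_nonempty_interior hint, hΩc.isClosed.closure_eq]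
    have := (hΦ.mono (hcl.symm ▸ hΩU)).image_closure
    rwa [hcl] at this
  · rintro _ ⟨⟨x, hx, rfl⟩, hxO⟩
    obtain ⟨v, hv, hnormal, hcurv⟩ := hcond x ⟨subset_closure hx, fun hxi => hxO ⟨x, hxi, rfl⟩⟩
    obtain ⟨L, W, hW, hL⟩ := hlip x (hΩU hx)
    exact isLocallyStrictlySupportedAt_image_of_eq_iInter_closedBall hr hΩ hΩc (hΦ.mono hΩU)
      (hbij.injOn.mono hΩU) hx (inter_mem hW (hU.mem_nhds (hΩU hx))) (fun y hy => hd y hy.2)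
      (hL.mono inter_subset_left) hv hnormal hcurv

theorem stmt_13 (n : ℕ) (hn : 2 ≤ n)
    (U V : Set (EuclideanSpace ℝ (Fin n))) (hU : IsOpen U) (hV : IsOpen V)
    (Φ : EuclideanSpace ℝ (Fin n) → EuclideanSpace ℝ (Fin n))
    (Φ' : EuclideanSpace ℝ (Fin n) →
      (EuclideanSpace ℝ (Fin n) ≃L[ℝ] EuclideanSpace ℝ (Fin n)))
    -- Φ is a C¹,¹-diffeomorphism of U onto V with derivative Φ'
    (hbij : Set.BijOn Φ U V)
    (hd : ∀ x ∈ U, HasFDerivAt Φ (Φ' x : EuclideanSpace ℝ (Fin n) →L[ℝ]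
      EuclideanSpace ℝ (Fin n)) x)
    (hlip : ∀ x ∈ U, ∃ (L : NNReal) (W : Set (EuclideanSpace ℝ (Fin n))),
      W ∈ nhds x ∧ LipschitzOnWith L (fun y =>
        (Φ' y : EuclideanSpace ℝ (Fin n) →L[ℝ] EuclideanSpace ℝ (Fin n))) W)
    -- Ω is r-convex, Ω ⊆ U, Ω ≠ ℝⁿ
    (r : ℝ) (hr : 0 < r) (M Ω : Set (EuclideanSpace ℝ (Fin n)))
    (hΩ : Ω = ⋂ z ∈ M, Metric.closedBall z r)
    (hΩU : Ω ⊆ U) (hΩne : Ω ≠ Set.univ)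
    -- the curvature condition at every boundary point
    (hcond : ∀ x ∈ frontier Ω, ∃ v : EuclideanSpace ℝ (Fin n), ‖v‖ = 1 ∧
      (∀ y ∈ Ω, ⟪v, y - x⟫ ≤ 0) ∧
      ∀ ξ : EuclideanSpace ℝ (Fin n), ⟪ξ, v⟫ = 0 → ξ ≠ 0 →
        Filter.limsup (fun t : ℝ =>
            ⟪v, (Φ' x).symm (Φ' (x + t • ξ) ξ - Φ' x ξ)⟫ / t)
          (nhdsWithin 0 (Set.Ioi 0)) < ‖ξ‖ ^ 2 / r) :
    Convex ℝ (Φ '' Ω) :=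
  stmt_13_general n U V hU Φ Φ' hbij hd hlip r hr M Ω hΩ hΩU hΩne hcond
end

section
/- Define h(α) = cosh((9β² + (α + 4β)²)^{1/2}) / cosh(α + 4β) − e^β for α, β ≥ 0. Then h(α) ≤ 0 for all α ≥ 0 and all β ≥ 0. -/
/-! With μ = α + 4β ≥ 4β one has √(9β² + μ²) ≤ μ + β, and cosh (μ + β) ≤ cosh μ · e^β
because the difference is sinh β · (cosh μ - sinh μ) ≥ 0. -/

open Real

lemma sqrt_nine_mul_sq_add_sq_le {β μ : ℝ} (hβ : 0 ≤ β) (hμ : 4 * β ≤ μ) :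
    √(9 * β ^ 2 + μ ^ 2) ≤ μ + β :=
  (sqrt_le_left (by linarith)).mpr (by nlinarith)

lemma cosh_add_le_cosh_mul_exp (x : ℝ) {y : ℝ} (hy : 0 ≤ y) :
    cosh (x + y) ≤ cosh x * exp y :=
  calc cosh (x + y) = cosh x * cosh y + sinh x * sinh y := cosh_add x y
    _ ≤ cosh x * cosh y + cosh x * sinh y := by
        gcongr
        exact (sinh_lt_cosh x).le
    _ = cosh x * exp y := by rw [← cosh_add_sinh y]; ring

theorem stmt_16 (α β : ℝ) (hα : 0 ≤ α) (hβ : 0 ≤ β) :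
    Real.cosh (Real.sqrt (9 * β ^ 2 + (α + 4 * β) ^ 2)) / Real.cosh (α + 4 * β)
      - Real.exp β ≤ 0 := by
  rw [sub_nonpos, div_le_iff₀ (cosh_pos _)]
  calc cosh √(9 * β ^ 2 + (α + 4 * β) ^ 2) ≤ cosh (α + 4 * β + β) := by
        rw [cosh_le_cosh, abs_of_nonneg (sqrt_nonneg _), abs_of_nonneg (by positivity)]
        exact sqrt_nine_mul_sq_add_sq_le hβ (by linarith)
    _ ≤ cosh (α + 4 * β) * exp β := cosh_add_le_cosh_mul_exp _ hβ
    _ = exp β * cosh (α + 4 * β) := mul_comm _ _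
end
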